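/- arXiv:2401.00359 — 2 statements merged into one kernel-verified Lean document; each statement's English description precedes it below -/
import Mathlib

section
/- For every integer k ≥ 3 and every integer d > k(k−1)/2, the bipartite hedgehog H_d^(k) satisfies ex(n, H_d^(k)) ≥ a_k · n^{k − k(k−1)/d} for some constant a_k > 0 depending only on k and all sufficiently large n, while its (k−1)-st skeletal degeneracy (the usual hypergraph degeneracy) satisfies d_{k−1}(H_d^(k)) = 1. -/
open Finset

/-- A `k`-uniform hypergraph on vertex type `V`: a finite set of `k`-element edges. -/
structure HyperGraph (k : ℕ) (V : Type) where
  edges : Finset (Finset V)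
  card_eq : ∀ e ∈ edges, e.card = k

/-- A finite set system `E` on `V` has degeneracy at most `d` if every nonempty induced
subsystem has a vertex of degree at most `d`. -/
def degenLE {V : Type} [DecidableEq V] (E : Finset (Finset V)) (d : ℕ) : Prop :=
  ∀ U : Finset V, U.Nonempty → ∃ v ∈ U, (E.filter fun e => v ∈ e ∧ e ⊆ U).card ≤ d

/-- The degeneracy of a finite set system: the least `d` such that every nonempty
induced subsystem has minimum degree at most `d`. -/
noncomputable def degeneracy {V : Type} [DecidableEq V] (E : Finset (Finset V)) : ℕ :=
  sInf {d | degenLE E d}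

namespace HyperGraph

variable {k : ℕ} {V W : Type}

/-- The edge set of the `i`-skeleton of `H`: all `(i+1)`-element subsets of edges of `H`. -/
def skeleton [DecidableEq V] (H : HyperGraph k V) (i : ℕ) : Finset (Finset V) :=
  H.edges.biUnion fun e => e.powersetCard (i + 1)

/-- The `i`-th skeletal degeneracy `d_i(H)`: the degeneracy of the `i`-skeleton of `H`. -/
noncomputable def skelDegen [DecidableEq V] (H : HyperGraph k V) (i : ℕ) : ℕ :=
  degeneracy (H.skeleton i)

/-- The skeletal degeneracy `d_1(H)`: the degeneracy of the `1`-skeleton of `H`. -/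
noncomputable def d1 [DecidableEq V] (H : HyperGraph k V) : ℕ := H.skelDegen 1

/-- `H` is `k`-partite with parts given by the fibers of `P`: every edge contains
exactly one vertex from each part. -/
def IsPartite [DecidableEq V] (H : HyperGraph k V) (P : V → Fin k) : Prop :=
  ∀ e ∈ H.edges, ∀ i : Fin k, (e.filter fun v => P v = i).card = 1

/-- `G` contains a copy of `H`. -/
def ContainsCopy [DecidableEq V] [DecidableEq W] (G : HyperGraph k W) (H : HyperGraph k V) :
    Prop :=
  ∃ f : V → W, Function.Injective f ∧ ∀ e ∈ H.edges, e.image f ∈ G.edges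

end HyperGraph

/-- The Turán number `ex(n, H)`: the maximum number of edges in a `k`-uniform hypergraph
on `n` vertices containing no copy of `H`. -/
noncomputable def turanNumber (k n : ℕ) {V : Type} [DecidableEq V] (H : HyperGraph k V) : ℕ :=
  sSup {m | ∃ G : HyperGraph k (Fin n), G.edges.card = m ∧ ¬ G.ContainsCopy H}

/-- The `q`-color Ramsey number `r(H; q)`: the least `N` such that every `q`-coloring of the
`k`-subsets of an `N`-set contains a monochromatic copy of `H`. -/
noncomputable def ramseyNumber (k q : ℕ) {V : Type} [DecidableEq V] (H : HyperGraph k V) : ℕ :=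
  sInf {N | ∀ c : Finset (Fin N) → Fin q,
    ∃ (f : V → Fin N) (i : Fin q), Function.Injective f ∧
      ∀ e ∈ H.edges, c (e.image f) = i}
/-- The complete `k`-partite `k`-uniform hypergraph with `d` vertices in each part:
the edges are all transversals. -/
def completePartite (k d : ℕ) : HyperGraph k (Fin k × Fin d) where
  edges := Finset.univ.image fun f : Fin k → Fin d => Finset.univ.image fun i => (i, f i)
  card_eq := by
    intro e he
    simp only [Finset.mem_image] at he
    obtain ⟨f, -, rfl⟩ := he
    rw [Finset.card_image_of_injective _ fun a b hab => by
      simpa using congrArg Prod.fst hab]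
    simp

/-- The bipartite hedgehog `H_d^(k)`: each edge `(i,j)` of `K_{d,d}` is extended to a
`k`-edge by `k-2` private new vertices. -/
def hedgehog (k d : ℕ) (hk : 2 ≤ k) :
    HyperGraph k (Fin d ⊕ Fin d ⊕ (Fin (k - 2) × Fin d × Fin d)) where
  edges := Finset.univ.image fun p : Fin d × Fin d =>
    {Sum.inl p.1, Sum.inr (Sum.inl p.2)} ∪
      Finset.univ.image fun m : Fin (k - 2) => Sum.inr (Sum.inr (m, p.1, p.2))
  card_eq := by
    intro e he
    simp only [Finset.mem_image] at he
    obtain ⟨p, -, rfl⟩ := he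
    have hdisj : Disjoint
        ({Sum.inl p.1, Sum.inr (Sum.inl p.2)} :
          Finset (Fin d ⊕ Fin d ⊕ (Fin (k - 2) × Fin d × Fin d)))
        (Finset.univ.image fun m : Fin (k - 2) => Sum.inr (Sum.inr (m, p.1, p.2))) := by
      simp [Finset.disjoint_left]
    rw [Finset.card_union_of_disjoint hdisj,
      Finset.card_image_of_injective _ fun a b hab => by simpa using hab]
    simp only [Finset.card_univ, Fintype.card_fin]
    rw [Finset.card_insert_of_notMem (by simp), Finset.card_singleton]
    omega

/-! ### Auxiliary development -/

noncomputable section AuxHH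
open Classical

namespace HH

/-- Counting functions vanishing on a prescribed set. -/
lemma count_zero {α : Type*} [Fintype α] [DecidableEq α] {M : ℕ} (hM : 0 < M)
    (S : Finset α) {P : (α → Fin M) → Prop} [DecidablePred P]
    (hP : ∀ ω, P ω ↔ ∀ p ∈ S, (ω p).val = 0) :
    (Finset.univ.filter P).card = M ^ (Fintype.card α - S.card) := by
  haveI : NeZero M := ⟨hM.ne'⟩
  rw [← Fintype.card_subtype]
  have e0 : {ω : α → Fin M // P ω} ≃ {ω : α → Fin M // ∀ p ∈ S, (ω p).val = 0} :=
    Equiv.subtypeEquivRight hP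
  have e : {ω : α → Fin M // ∀ p ∈ S, (ω p).val = 0} ≃ (↥(Sᶜ : Finset α) → Fin M) :=
  { toFun := fun ω p => ω.1 p.1
    invFun := fun g => ⟨fun p => if h : p ∈ S then 0 else g ⟨p, Finset.mem_compl.2 h⟩,
      fun p hp => by simp [dif_pos hp]⟩
    left_inv := fun ω => Subtype.ext (funext fun p => by
      by_cases h : p ∈ S
      · have h2 := ω.2 p h
        simp only [dif_pos h]
        exact (Fin.ext h2.symm)
      · simp [h])
    right_inv := fun g => funext fun p => by
      have hp : ↑p ∉ S := Finset.mem_compl.1 p.2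
      simp [hp] }
  rw [Fintype.card_congr (e0.trans e), Fintype.card_fun]
  simp [Finset.card_compl]

variable (n M k d : ℕ)

/-- The probability space: colorings of all finsets of `Fin n` by `Fin M`. -/
abbrev Om := Finset (Fin n) → Fin M

/-- All pairs inside `T`. -/
def pr (T : Finset (Fin n)) : Finset (Finset (Fin n)) := Finset.powersetCard 2 T

/-- Cross pairs between `A` and `B`. -/
def cross (A B : Finset (Fin n)) : Finset (Finset (Fin n)) :=
  A.biUnion fun a => B.image fun b => {a, b}

variable {n}

lemma mem_cross {A B : Finset (Fin n)} {S : Finset (Fin n)} :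
    S ∈ cross n A B ↔ ∃ a ∈ A, ∃ b ∈ B, S = {a, b} := by
  simp [cross, eq_comm]

lemma card_cross {A B : Finset (Fin n)} (hAB : Disjoint A B) :
    (cross n A B).card = A.card * B.card := by
  rw [cross, Finset.card_biUnion]
  · rw [Finset.sum_congr rfl (g := fun _ => B.card) (fun a ha => ?_), Finset.sum_const,
      smul_eq_mul]
    refine Finset.card_image_of_injOn fun b hb b' hb' hbb => ?_
    have hm : b ∈ ({a, b'} : Finset (Fin n)) := by rw [← hbb]; simp
    rcases Finset.mem_insert.1 hm with h | h
    · have h2 : b = a := by simpa using h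
      exact absurd (h2 ▸ hb) (fun hx => Finset.disjoint_right.1 hAB hx ha)
    · simpa using h
  · intro a ha a' ha' haa
    simp only [Finset.disjoint_left, Finset.mem_image]
    rintro S ⟨b, hb, rfl⟩ ⟨b', hb', hSS⟩
    have hm : a ∈ ({a', b'} : Finset (Fin n)) := by rw [hSS]; simp
    rcases Finset.mem_insert.1 hm with h | h
    · exact haa h
    · have h2 : a = b' := by simpa using h
      exact (Finset.disjoint_left.1 hAB ha (h2 ▸ hb'))

variable (n)

/-- `ω` vanishes on `S`. -/
def az (ω : Om n M) (S : Finset (Finset (Fin n))) : Prop := ∀ p ∈ S, (ω p).val = 0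

/-- All `k`-subsets of the vertex set. -/
def Tset : Finset (Finset (Fin n)) := Finset.powersetCard k Finset.univ

/-- The `k`-cliques of the graph determined by `ω`. -/
def cliq (ω : Om n M) : Finset (Finset (Fin n)) :=
  (Tset n k).filter fun T => az n M ω (pr n T)

/-- `T` touches a complete bipartite `(d,d)` pattern present in `ω`. -/
def isbad (ω : Om n M) (T : Finset (Fin n)) : Prop :=
  ∃ A B : Finset (Fin n), A.card = d ∧ B.card = d ∧ Disjoint A B ∧
    az n M ω (cross n A B) ∧ ∃ a ∈ A, ∃ b ∈ B, ({a, b} : Finset (Fin n)) ⊆ T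

/-- The surviving cliques. -/
def good (ω : Om n M) : Finset (Finset (Fin n)) :=
  (cliq n M k ω).filter fun T => ¬ isbad n M d ω T

/-- Templates for bad events. -/
def trips : Finset (Finset (Fin n) × Finset (Fin n) × Finset (Fin n)) :=
  ((Finset.powersetCard d Finset.univ) ×ˢ (Finset.powersetCard d Finset.univ) ×ˢ Tset n k).filter
    fun x => Disjoint x.1 x.2.1 ∧ ∃ a ∈ x.1, ∃ b ∈ x.2.1, ({a, b} : Finset (Fin n)) ⊆ x.2.2

def Xc (ω : Om n M) : ℕ := (cliq n M k ω).card

def Yc (ω : Om n M) : ℕ :=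
  ((trips n k d).filter fun x => az n M ω (cross n x.1 x.2.1 ∪ pr n x.2.2)).card

lemma sumX (hM : 0 < M) :
    ∑ ω : Om n M, Xc n M k ω = n.choose k * M ^ (2 ^ n - k.choose 2) := by
  simp only [Xc, cliq, Finset.card_filter]
  rw [Finset.sum_comm]
  refine (Finset.sum_congr (g := fun _ => M ^ (2 ^ n - k.choose 2)) rfl
    fun T hT => ?_).trans ?_
  · rw [← Finset.card_filter,
      count_zero hM (pr n T) (P := fun ω => az n M ω (pr n T)) (fun ω => Iff.rfl),
      pr, Finset.card_powersetCard, (Finset.mem_powersetCard.1 hT).2,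
      Fintype.card_finset, Fintype.card_fin]
  · rw [Finset.sum_const, smul_eq_mul, Tset, Finset.card_powersetCard, Finset.card_univ,
      Fintype.card_fin]

lemma sumY (hM : 0 < M) :
    ∑ ω : Om n M, Yc n M k d ω ≤ (trips n k d).card * M ^ (2 ^ n - d * d) := by
  simp only [Yc, Finset.card_filter]
  rw [Finset.sum_comm]
  refine le_trans (Finset.sum_le_sum (g := fun _ => M ^ (2 ^ n - d * d)) fun x hx => ?_) ?_
  · rw [← Finset.card_filter,
      count_zero hM (cross n x.1 x.2.1 ∪ pr n x.2.2)
        (P := fun ω => az n M ω (cross n x.1 x.2.1 ∪ pr n x.2.2)) (fun ω => Iff.rfl)]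
    refine Nat.pow_le_pow_right hM ?_
    have hx' := Finset.mem_filter.1 hx
    have hx1 := hx'.1
    simp only [Finset.mem_product] at hx1
    have hA : x.1.card = d := (Finset.mem_powersetCard.1 hx1.1).2
    have hB : x.2.1.card = d := (Finset.mem_powersetCard.1 hx1.2.1).2
    have hcc : (cross n x.1 x.2.1).card = d * d := by
      rw [card_cross hx'.2.1, hA, hB]
    have hle : d * d ≤ (cross n x.1 x.2.1 ∪ pr n x.2.2).card := by
      rw [← hcc]
      exact Finset.card_le_card Finset.subset_union_left
    rw [Fintype.card_finset, Fintype.card_fin]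
    omega
  · rw [Finset.sum_const, smul_eq_mul]

/-- Witness chooser for the shared pair of a triple. -/
noncomputable def wit [Nonempty (Fin n)]
    (x : Finset (Fin n) × Finset (Fin n) × Finset (Fin n)) : Fin n × Fin n :=
  if h : ∃ a ∈ x.1, ∃ b ∈ x.2.1, ({a, b} : Finset (Fin n)) ⊆ x.2.2 then
    (h.choose, h.choose_spec.2.choose)
  else (Classical.arbitrary _, Classical.arbitrary _)

lemma wit_spec [Nonempty (Fin n)]
    {x : Finset (Fin n) × Finset (Fin n) × Finset (Fin n)}
    (h : ∃ a ∈ x.1, ∃ b ∈ x.2.1, ({a, b} : Finset (Fin n)) ⊆ x.2.2) :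
    (wit n x).1 ∈ x.1 ∧ (wit n x).2 ∈ x.2.1 ∧
      ({(wit n x).1, (wit n x).2} : Finset (Fin n)) ⊆ x.2.2 := by
  rw [wit, dif_pos h]
  exact ⟨h.choose_spec.1, h.choose_spec.2.choose_spec.1, h.choose_spec.2.choose_spec.2⟩

lemma trips_card (hn : 0 < n) :
    (trips n k d).card ≤ n.choose d * n.choose d * (d * d * n.choose (k - 2)) := by
  haveI : Nonempty (Fin n) := Fin.pos_iff_nonempty.1 hn
  have hmap : ∀ x ∈ trips n k d, (x.1, x.2.1) ∈
      (Finset.powersetCard d (Finset.univ : Finset (Fin n))) ×ˢ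
        (Finset.powersetCard d Finset.univ) := by
    intro x hx
    have hx1 := (Finset.mem_filter.1 hx).1
    simp only [Finset.mem_product] at hx1 ⊢
    exact ⟨hx1.1, hx1.2.1⟩
  rw [Finset.card_eq_sum_card_fiberwise hmap]
  refine le_trans (Finset.sum_le_sum
      (g := fun _ => d * d * n.choose (k - 2)) fun AB hAB => ?_) ?_
  · simp only [Finset.mem_product] at hAB
    have hA : AB.1.card = d := (Finset.mem_powersetCard.1 hAB.1).2
    have hB : AB.2.card = d := (Finset.mem_powersetCard.1 hAB.2).2
    have hinj : ((trips n k d).filter fun x => (x.1, x.2.1) = AB).card ≤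
        ((AB.1 ×ˢ AB.2) ×ˢ Finset.powersetCard (k - 2)
          (Finset.univ : Finset (Fin n))).card := by
      refine Finset.card_le_card_of_injOn
        (fun x => (wit n x, x.2.2 \ {(wit n x).1, (wit n x).2})) ?_ ?_
      · intro x hx
        have hx0 := Finset.mem_filter.1 hx
        have hxt := Finset.mem_filter.1 hx0.1
        have hxw := wit_spec (n := n) hxt.2.2
        have hxAB := hx0.2
        have hxA : x.1 = AB.1 := congrArg Prod.fst hxAB
        have hxB : x.2.1 = AB.2 := congrArg Prod.snd hxAB
        have hxdisj : Disjoint x.1 x.2.1 := hxt.2.1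
        have hne : (wit n x).1 ≠ (wit n x).2 := by
          intro hcon
          exact Finset.disjoint_left.1 hxdisj hxw.1 (hcon ▸ hxw.2.1)
        have hTk : x.2.2.card = k := by
          have hx1 := hxt.1
          simp only [Finset.mem_product] at hx1
          exact (Finset.mem_powersetCard.1 hx1.2.2).2
        simp only [Finset.mem_coe, Finset.mem_product]
        refine ⟨⟨hxA ▸ hxw.1, hxB ▸ hxw.2.1⟩, ?_⟩
        rw [Finset.mem_powersetCard]
        refine ⟨Finset.subset_univ _, ?_⟩
        rw [Finset.card_sdiff_of_subset hxw.2.2, hTk, Finset.card_insert_of_notMem (by simp [hne]),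
          Finset.card_singleton]
      · intro x hx y hy hxy
        have hx0 := Finset.mem_filter.1 hx
        have hy0 := Finset.mem_filter.1 hy
        have hxw := wit_spec (n := n) (Finset.mem_filter.1 hx0.1).2.2
        have hyw := wit_spec (n := n) (Finset.mem_filter.1 hy0.1).2.2
        have h1 : wit n x = wit n y := congrArg Prod.fst hxy
        have h2 : x.2.2 \ {(wit n x).1, (wit n x).2} =
            y.2.2 \ {(wit n y).1, (wit n y).2} := congrArg Prod.snd hxy
        have h3 : x.2.2 = y.2.2 := by
          rw [← Finset.sdiff_union_of_subset hxw.2.2, ← Finset.sdiff_union_of_subset hyw.2.2,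
            h2, h1]
        have hx12 : x.1 = AB.1 ∧ x.2.1 = AB.2 := by
          have h := hx0.2; rw [Prod.ext_iff] at h; exact h
        have hy12 : y.1 = AB.1 ∧ y.2.1 = AB.2 := by
          have h := hy0.2; rw [Prod.ext_iff] at h; exact h
        have h4 : x.1 = y.1 := hx12.1.trans hy12.1.symm
        have h5 : x.2.1 = y.2.1 := hx12.2.trans hy12.2.symm
        exact Prod.ext h4 (Prod.ext h5 h3)
    refine hinj.trans ?_
    rw [Finset.card_product, Finset.card_product, hA, hB, Finset.card_powersetCard,
      Finset.card_univ, Fintype.card_fin]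
  · rw [Finset.sum_const, smul_eq_mul]
    have hcp : ((Finset.powersetCard d (Finset.univ : Finset (Fin n))) ×ˢ
        (Finset.powersetCard d (Finset.univ : Finset (Fin n)))).card
        = n.choose d * n.choose d := by
      simp [Finset.card_product, Finset.card_powersetCard]
    rw [hcp]

/-- Witness chooser for a bad clique. -/
noncomputable def wAB (ω : Om n M) (T : Finset (Fin n)) : Finset (Fin n) × Finset (Fin n) :=
  if h : isbad n M d ω T then (h.choose, h.choose_spec.choose) else (∅, ∅)

lemma wAB_spec {ω : Om n M} {T : Finset (Fin n)} (h : isbad n M d ω T) :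
    (wAB n M d ω T).1.card = d ∧ (wAB n M d ω T).2.card = d ∧
      Disjoint (wAB n M d ω T).1 (wAB n M d ω T).2 ∧
      az n M ω (cross n (wAB n M d ω T).1 (wAB n M d ω T).2) ∧
      ∃ a ∈ (wAB n M d ω T).1, ∃ b ∈ (wAB n M d ω T).2,
        ({a, b} : Finset (Fin n)) ⊆ T := by
  rw [wAB, dif_pos h]
  exact h.choose_spec.choose_spec

lemma bad_le_Y (ω : Om n M) :
    ((cliq n M k ω).filter fun T => isbad n M d ω T).card ≤ Yc n M k d ω := by
  refine Finset.card_le_card_of_injOn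
    (fun T => ((wAB n M d ω T).1, (wAB n M d ω T).2, T)) ?_ ?_
  · intro T hT
    have hT0 := Finset.mem_filter.1 hT
    have hcl := Finset.mem_filter.1 hT0.1
    have hs := wAB_spec (n := n) (M := M) (d := d) hT0.2
    rw [Finset.mem_coe, Finset.mem_filter]
    constructor
    · rw [trips, Finset.mem_filter]
      constructor
      · simp only [Finset.mem_product]
        exact ⟨Finset.mem_powersetCard.2 ⟨Finset.subset_univ _, hs.1⟩,
          Finset.mem_powersetCard.2 ⟨Finset.subset_univ _, hs.2.1⟩, hcl.1⟩
      · exact ⟨hs.2.2.1, hs.2.2.2.2⟩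
    · intro p hp
      rcases Finset.mem_union.1 hp with h | h
      · exact hs.2.2.2.1 p h
      · exact hcl.2 p h
  · intro x hx y hy hxy
    exact congrArg (fun z : _ × _ × _ => z.2.2) hxy

lemma exists_good_big (hM : 0 < M) (hn : 0 < n) (hc2d : k.choose 2 ≤ d * d)
    (hdn : d * d ≤ 2 ^ n)
    (hcond : 4 * (n.choose d * n.choose d * (d * d * n.choose (k - 2)))
      ≤ n.choose k * M ^ (d * d - k.choose 2)) :
    ∃ ω : Om n M, n.choose k / M ^ k.choose 2 ≤ 2 * (good n M k d ω).card := by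
  haveI : Nonempty (Fin M) := Fin.pos_iff_nonempty.1 hM
  set t0 := n.choose k / M ^ k.choose 2 with ht0
  have key : ∑ ω : Om n M, (4 * Yc n M k d ω + t0) ≤ ∑ ω : Om n M, 2 * Xc n M k ω := by
    rw [Finset.sum_add_distrib, ← Finset.mul_sum, ← Finset.mul_sum, Finset.sum_const,
      smul_eq_mul, sumX n M k hM, Finset.card_univ, Fintype.card_fun,
      Fintype.card_fin, Fintype.card_finset, Fintype.card_fin]
    have h1 : 4 * ∑ ω : Om n M, Yc n M k d ω ≤ n.choose k * M ^ (2 ^ n - k.choose 2) := by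
      have step1 : 4 * ∑ ω : Om n M, Yc n M k d ω ≤
          4 * ((n.choose d * n.choose d * (d * d * n.choose (k - 2)))
            * M ^ (2 ^ n - d * d)) :=
        Nat.mul_le_mul_left 4 ((sumY n M k d hM).trans
          (Nat.mul_le_mul_right _ (trips_card n k d hn)))
      refine step1.trans ?_
      calc 4 * ((n.choose d * n.choose d * (d * d * n.choose (k - 2)))
            * M ^ (2 ^ n - d * d))
          = (4 * (n.choose d * n.choose d * (d * d * n.choose (k - 2))))
            * M ^ (2 ^ n - d * d) := by ring
        _ ≤ (n.choose k * M ^ (d * d - k.choose 2)) * M ^ (2 ^ n - d * d) :=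
            Nat.mul_le_mul_right _ hcond
        _ = n.choose k * M ^ (2 ^ n - k.choose 2) := by
            rw [mul_assoc, ← pow_add]
            congr 2
            omega
    have h2 : M ^ 2 ^ n * t0 ≤ n.choose k * M ^ (2 ^ n - k.choose 2) := by
      have hsp : M ^ 2 ^ n = M ^ (2 ^ n - k.choose 2) * M ^ k.choose 2 := by
        rw [← pow_add]
        congr 1
        omega
      rw [ht0, hsp, mul_assoc, mul_comm (n.choose k)]
      refine Nat.mul_le_mul_left _ ?_
      exact le_trans (le_of_eq (mul_comm _ _)) (Nat.div_mul_le_self _ _)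
    omega
  obtain ⟨ω, -, hω⟩ := Finset.exists_le_of_sum_le Finset.univ_nonempty key
  refine ⟨ω, ?_⟩
  have hsplit : (good n M k d ω).card +
      ((cliq n M k ω).filter fun T => isbad n M d ω T).card = Xc n M k ω := by
    rw [Xc, good]
    rw [add_comm]
    exact Finset.card_filter_add_card_filter_not (fun T => isbad n M d ω T)
  have hbad := bad_le_Y n M k d ω
  omega

/-- The surviving hypergraph. -/
def Ghyper (ω : Om n M) : HyperGraph k (Fin n) where
  edges := good n M k d ω
  card_eq := by
    intro e he
    have he2 : e ∈ Tset n k := (Finset.mem_filter.1 (Finset.mem_filter.1 he).1).1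
    exact (Finset.mem_powersetCard.1 he2).2

lemma ghyper_free (hk : 3 ≤ k) (hd : 0 < d) (hk2 : 2 ≤ k) (ω : Om n M) :
    ¬ (Ghyper n M k d ω).ContainsCopy (hedgehog k d hk2) := by
  rintro ⟨f, hf, hmap⟩
  have hedge : ∀ p : Fin d × Fin d,
      (({Sum.inl p.1, Sum.inr (Sum.inl p.2)} ∪
        (Finset.univ.image fun m : Fin (k - 2) => Sum.inr (Sum.inr (m, p.1, p.2)))) :
          Finset (Fin d ⊕ Fin d ⊕ (Fin (k - 2) × Fin d × Fin d))) ∈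
        (hedgehog k d hk2).edges :=
    fun p => Finset.mem_image.2 ⟨p, Finset.mem_univ p, rfl⟩
  have hTg : ∀ p : Fin d × Fin d,
      (({Sum.inl p.1, Sum.inr (Sum.inl p.2)} ∪
        (Finset.univ.image fun m : Fin (k - 2) => Sum.inr (Sum.inr (m, p.1, p.2)))) :
          Finset (Fin d ⊕ Fin d ⊕ (Fin (k - 2) × Fin d × Fin d))).image f
        ∈ good n M k d ω := fun p => hmap _ (hedge p)
  set A := (Finset.univ : Finset (Fin d)).image fun i => f (Sum.inl i) with hA
  set B := (Finset.univ : Finset (Fin d)).image fun j => f (Sum.inr (Sum.inl j)) with hB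
  have hAcard : A.card = d := by
    rw [hA, Finset.card_image_of_injective _ fun i j h => by
      have := hf h; simpa using this]
    simp
  have hBcard : B.card = d := by
    rw [hB, Finset.card_image_of_injective _ fun i j h => by
      have := hf h; simpa using this]
    simp
  have hABdisj : Disjoint A B := by
    rw [Finset.disjoint_left]
    rintro a ha hb
    rcases Finset.mem_image.1 ha with ⟨i, -, rfl⟩
    rcases Finset.mem_image.1 hb with ⟨j, -, hj⟩
    have := hf hj
    simp at this
  have hpair : ∀ p : Fin d × Fin d,
      ({f (Sum.inl p.1), f (Sum.inr (Sum.inl p.2))} : Finset (Fin n)) ∈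
        pr n ((({Sum.inl p.1, Sum.inr (Sum.inl p.2)} ∪
          (Finset.univ.image fun m : Fin (k - 2) => Sum.inr (Sum.inr (m, p.1, p.2)))) :
            Finset (Fin d ⊕ Fin d ⊕ (Fin (k - 2) × Fin d × Fin d))).image f) := by
    intro p
    rw [pr, Finset.mem_powersetCard]
    constructor
    · intro x hx
      rcases Finset.mem_insert.1 hx with h | h
      · exact h ▸ Finset.mem_image_of_mem f (by simp)
      · have : x = f (Sum.inr (Sum.inl p.2)) := by simpa using h
        exact this ▸ Finset.mem_image_of_mem f (by simp)
    · rw [Finset.card_insert_of_notMem (by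
        simp only [Finset.mem_singleton]
        intro hcon
        have := hf hcon
        simp at this), Finset.card_singleton]
  have hcrossz : az n M ω (cross n A B) := by
    intro S hS
    rcases mem_cross.1 hS with ⟨a, ha, b, hb, rfl⟩
    rcases Finset.mem_image.1 ha with ⟨i, -, rfl⟩
    rcases Finset.mem_image.1 hb with ⟨j, -, rfl⟩
    have hT := hTg (i, j)
    have hcl := Finset.mem_filter.1 (Finset.mem_filter.1 hT).1
    exact hcl.2 _ (hpair (i, j))
  have hd0 : (⟨0, hd⟩ : Fin d) = ⟨0, hd⟩ := rfl
  set p0 : Fin d × Fin d := (⟨0, hd⟩, ⟨0, hd⟩) with hp0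
  have hT0 := hTg p0
  have hbad : isbad n M d ω
      ((({Sum.inl p0.1, Sum.inr (Sum.inl p0.2)} ∪
        (Finset.univ.image fun m : Fin (k - 2) => Sum.inr (Sum.inr (m, p0.1, p0.2)))) :
          Finset (Fin d ⊕ Fin d ⊕ (Fin (k - 2) × Fin d × Fin d))).image f) := by
    refine ⟨A, B, hAcard, hBcard, hABdisj, hcrossz,
      f (Sum.inl p0.1), ?_, f (Sum.inr (Sum.inl p0.2)), ?_, ?_⟩
    · exact Finset.mem_image_of_mem _ (Finset.mem_univ _)
    · exact Finset.mem_image_of_mem _ (Finset.mem_univ _)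
    · exact (Finset.mem_powersetCard.1 (hpair p0)).1
  exact (Finset.mem_filter.1 hT0).2 hbad

end HH

end AuxHH

noncomputable section AuxHH2

namespace HH

lemma le_turan {k n : ℕ} {V : Type} [DecidableEq V] (H : HyperGraph k V)
    (G : HyperGraph k (Fin n)) (hG : ¬ G.ContainsCopy H) :
    G.edges.card ≤ turanNumber k n H := by
  refine le_csSup ⟨2 ^ n, ?_⟩ ⟨G, rfl, hG⟩
  rintro m ⟨G', hc, -⟩
  calc m = G'.edges.card := hc.symm
    _ ≤ (Finset.univ : Finset (Finset (Fin n))).card := Finset.card_le_univ _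
    _ = 2 ^ n := by rw [Finset.card_univ, Fintype.card_finset, Fintype.card_fin]

section Degen

variable (k d : ℕ) (hk : 3 ≤ k) (hdpos : 0 < d) (hk2 : 2 ≤ k)

/-- Abbreviation for a hedgehog edge. -/
def hedge (p : Fin d × Fin d) : Finset (Fin d ⊕ Fin d ⊕ (Fin (k - 2) × Fin d × Fin d)) :=
  {Sum.inl p.1, Sum.inr (Sum.inl p.2)} ∪
    Finset.univ.image fun m : Fin (k - 2) => Sum.inr (Sum.inr (m, p.1, p.2))

lemma mem_hedgehog_edges {e : Finset (Fin d ⊕ Fin d ⊕ (Fin (k - 2) × Fin d × Fin d))} :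
    e ∈ (hedgehog k d hk2).edges ↔ ∃ p : Fin d × Fin d, e = hedge k d p := by
  simp only [hedgehog, Finset.mem_image, hedge]
  constructor
  · rintro ⟨p, -, rfl⟩; exact ⟨p, rfl⟩
  · rintro ⟨p, rfl⟩; exact ⟨p, Finset.mem_univ p, rfl⟩

lemma skeleton_eq :
    (hedgehog k d hk2).skeleton (k - 1) = (hedgehog k d hk2).edges := by
  have hk1 : k - 1 + 1 = k := by omega
  rw [HyperGraph.skeleton, hk1]
  have hsing : ∀ e ∈ (hedgehog k d hk2).edges,
      Finset.powersetCard k e = {e} := by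
    intro e he
    have hec := (hedgehog k d hk2).card_eq e he
    ext S
    rw [Finset.mem_powersetCard, Finset.mem_singleton]
    constructor
    · rintro ⟨hsub, hcard⟩
      exact Finset.eq_of_subset_of_card_le hsub (by rw [hec, hcard])
    · rintro rfl
      exact ⟨subset_rfl, hec⟩
  rw [Finset.biUnion_congr rfl hsing]
  exact Finset.biUnion_singleton_eq_self

lemma degen_one (hk : 3 ≤ k) (hdpos : 0 < d) :
    (hedgehog k d hk2).skelDegen (k - 1) = 1 := by
  rw [HyperGraph.skelDegen, skeleton_eq k d hk2]
  set E := (hedgehog k d hk2).edges with hE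
  have hkm2 : 0 < k - 2 := by omega
  have mem1 : degenLE E 1 := by
    intro U hU
    by_cases hex : ∃ e ∈ E, e ⊆ U
    · obtain ⟨e, heE, heU⟩ := hex
      obtain ⟨p, rfl⟩ := (mem_hedgehog_edges k d hk2).1 heE
      set v : Fin d ⊕ Fin d ⊕ (Fin (k - 2) × Fin d × Fin d) :=
        Sum.inr (Sum.inr (⟨0, hkm2⟩, p.1, p.2)) with hv
      have hve : v ∈ hedge k d p := by
        rw [hedge]
        exact Finset.mem_union_right _
          (Finset.mem_image.2 ⟨⟨0, hkm2⟩, Finset.mem_univ _, rfl⟩)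
      refine ⟨v, heU hve, ?_⟩
      letI : DecidablePred fun e : Finset (Fin d ⊕ Fin d ⊕ (Fin (k - 2) × Fin d × Fin d)) =>
        v ∈ e ∧ e ⊆ U := fun _ => inferInstance
      refine le_trans (Finset.card_le_card
        ((?_ : (E.filter fun e => v ∈ e ∧ e ⊆ U) ⊆ {hedge k d p}))) (by simp)
      intro e' he'
      obtain ⟨he'E, hve', -⟩ := Finset.mem_filter.1 he'
      obtain ⟨q, rfl⟩ := (mem_hedgehog_edges k d hk2).1 he'E
      have hq : q = p := by
        rw [hedge, Finset.mem_union] at hve'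
        rcases hve' with h | h
        · simp [hv] at h
        · obtain ⟨m, -, hm⟩ := Finset.mem_image.1 h
          rw [hv] at hm
          have hm2 := Sum.inr_injective (Sum.inr_injective hm)
          have h3 := congrArg Prod.snd hm2
          exact Prod.ext (congrArg (fun z => z.1) h3) (congrArg (fun z => z.2) h3)
      rw [hq]
      exact Finset.mem_singleton_self _
    · obtain ⟨v, hvU⟩ := hU
      refine ⟨v, hvU, ?_⟩
      letI : DecidablePred fun e : Finset (Fin d ⊕ Fin d ⊕ (Fin (k - 2) × Fin d × Fin d)) =>
        v ∈ e ∧ e ⊆ U := fun _ => inferInstance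
      have hemp : (E.filter fun e => v ∈ e ∧ e ⊆ U) = ∅ :=
        Finset.filter_eq_empty_iff.2 fun {e'} he'E hcon => hex ⟨e', he'E, hcon.2⟩
      rw [hemp]
      simp
  have not0 : ¬ degenLE E 0 := by
    intro hdeg
    set p0 : Fin d × Fin d := (⟨0, hdpos⟩, ⟨0, hdpos⟩) with hp0
    have he0 : hedge k d p0 ∈ E := (mem_hedgehog_edges k d hk2).2 ⟨p0, rfl⟩
    have hne : (hedge k d p0).Nonempty :=
      ⟨Sum.inl p0.1, by rw [hedge]; exact Finset.mem_union_left _ (by simp)⟩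
    obtain ⟨v, hvU, hcard⟩ := hdeg (hedge k d p0) hne
    letI : DecidablePred fun e : Finset (Fin d ⊕ Fin d ⊕ (Fin (k - 2) × Fin d × Fin d)) =>
      v ∈ e ∧ e ⊆ hedge k d p0 := fun _ => inferInstance
    have hmem : hedge k d p0 ∈ E.filter fun e' => v ∈ e' ∧ e' ⊆ hedge k d p0 :=
      Finset.mem_filter.2 ⟨he0, hvU, subset_rfl⟩
    have hpos := Finset.card_pos.2 ⟨_, hmem⟩
    omega
  rw [degeneracy]
  have hmem1 : (1 : ℕ) ∈ {d' | degenLE E d'} := mem1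
  refine le_antisymm (Nat.sInf_le hmem1) ?_
  rcases Nat.eq_zero_or_pos (sInf {d' | degenLE E d'}) with h | h
  · exfalso
    rcases Nat.sInf_eq_zero.1 h with h0 | hempty
    · exact not0 h0
    · rw [hempty] at hmem1
      exact hmem1
  · exact h
end Degen

end HH

end AuxHH2

noncomputable section AuxHH3

namespace HH

open Filter

lemma turan_part (k d : ℕ) (hk : 3 ≤ k) (hd : k * (k - 1) / 2 < d) (hk2 : 2 ≤ k) :
    ∃ a > (0 : ℝ), ∃ n0 : ℕ, ∀ n : ℕ, n0 ≤ n →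
      a * (n : ℝ) ^ ((k : ℝ) - (k : ℝ) * ((k : ℝ) - 1) / (d : ℝ)) ≤
        (turanNumber k n (hedgehog k d hk2) : ℝ) := by
  have hc2 : k.choose 2 = k * (k - 1) / 2 := Nat.choose_two_right k
  set c2 := k.choose 2 with hc2def
  have heven : 2 * c2 = k * (k - 1) := by
    have hev : Even ((k - 1) * ((k - 1) + 1)) := Nat.even_mul_succ_self (k - 1)
    rw [show (k - 1) + 1 = k by omega] at hev
    have he : 2 ∣ k * (k - 1) := by
      rw [Nat.mul_comm]
      exact hev.two_dvd
    omega
  have hc2d : c2 < d := by omega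
  have hc2three : 3 ≤ c2 := by
    have h6 : 3 * 2 ≤ k * (k - 1) := Nat.mul_le_mul hk (by omega : 2 ≤ k - 1)
    omega
  have hdpos : 0 < d := by omega
  have hdR : (0:ℝ) < d := by exact_mod_cast hdpos
  -- constants
  set K1 : ℝ := (k.factorial : ℝ) * 2 ^ k with hK1
  have hK1pos : 0 < K1 := by positivity
  set C1 : ℝ := 1 / (K1 * 2 ^ c2) with hC1
  have hC1pos : 0 < C1 := by positivity
  -- exponents
  set α : ℝ := 2 / (d : ℝ) with hα
  have hαpos : 0 < α := by positivity
  set ε1 : ℝ := 2 - 2 * (c2 : ℝ) / d with hε1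
  have hε1pos : 0 < ε1 := by
    rw [hε1]
    have hlt : (c2 : ℝ) / d < 1 := by
      rw [div_lt_one hdR]
      exact_mod_cast hc2d
    have h2 : 2 * (c2 : ℝ) / d = 2 * ((c2 : ℝ) / d) := by ring
    rw [h2]
    linarith
  set eR : ℝ := (k : ℝ) - 2 * (c2 : ℝ) / d with heR
  have heRpos : 0 < eR := by
    have h1 : 0 < ε1 := hε1pos
    rw [hε1] at h1
    have h3 : (3 : ℝ) ≤ k := by exact_mod_cast hk
    rw [heR]
    linarith
  have h2c2 : 2 * (c2 : ℝ) = (k : ℝ) * ((k : ℝ) - 1) := by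
    have hcast : ((2 * c2 : ℕ) : ℝ) = ((k * (k - 1) : ℕ) : ℝ) := by rw [heven]
    push_cast [Nat.cast_sub (show 1 ≤ k by omega)] at hcast
    linarith [hcast]
  have hexp_eq : (k : ℝ) - (k : ℝ) * ((k : ℝ) - 1) / (d : ℝ) = eR := by
    rw [heR, ← h2c2]
  -- eventual bounds
  have htend1 : Tendsto (fun n : ℕ => (n : ℝ) ^ ε1) atTop atTop :=
    (tendsto_rpow_atTop hε1pos).comp tendsto_natCast_atTop_atTop
  have htend2 : Tendsto (fun n : ℕ => (n : ℝ) ^ eR) atTop atTop :=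
    (tendsto_rpow_atTop heRpos).comp tendsto_natCast_atTop_atTop
  obtain ⟨n0, hn0⟩ := Filter.eventually_atTop.1
    (((htend1.eventually_ge_atTop (4 * (d:ℝ) * d * K1)).and
      (htend2.eventually_ge_atTop (2 / C1))).and
      (Filter.eventually_ge_atTop (max (d * d) (2 * k) + 1)))
  refine ⟨C1 / 4, by positivity, n0, fun n hn => ?_⟩
  obtain ⟨⟨hE1, hE2⟩, hE3⟩ := hn0 n hn
  have hn1 : 1 ≤ n := by omega
  have hddn : d * d ≤ n := by omega
  have h2kn : 2 * k ≤ n := by omega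
  set x : ℝ := (n : ℝ) with hx
  have hx1 : (1:ℝ) ≤ x := by rw [hx]; exact_mod_cast hn1
  have hx0 : (0:ℝ) < x := by linarith
  -- the modulus M
  set M : ℕ := ⌈x ^ α⌉₊ with hM
  have hxα1 : (1:ℝ) ≤ x ^ α := by
    have := Real.rpow_le_rpow_of_exponent_le hx1 (le_of_lt hαpos)
    rwa [Real.rpow_zero] at this
  have hxα0 : (0:ℝ) < x ^ α := by linarith
  have hM0 : 0 < M := Nat.ceil_pos.2 hxα0
  have hMge : x ^ α ≤ (M : ℝ) := Nat.le_ceil _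
  have hMle : (M : ℝ) ≤ 2 * x ^ α := by
    have h := (Nat.ceil_lt_add_one (le_of_lt hxα0)).le
    calc (M:ℝ) ≤ x ^ α + 1 := h
      _ ≤ 2 * x ^ α := by linarith
  -- rpow facts
  have hpow_nat : ∀ m : ℕ, (x ^ α) ^ m = x ^ (α * m) := by
    intro m
    rw [← Real.rpow_natCast (x ^ α) m, ← Real.rpow_mul (le_of_lt hx0)]
  have hxk_choose : x ^ k / K1 ≤ (n.choose k : ℝ) := by
    have hp := Nat.pow_le_choose k n (α := ℝ)
    have hhalf : x / 2 ≤ ((n + 1 - k : ℕ) : ℝ) := by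
      rw [Nat.cast_sub (by omega : k ≤ n + 1)]
      push_cast
      have : (k : ℝ) ≤ x / 2 := by
        rw [hx]
        have : (2 * k : ℕ) ≤ n := h2kn
        have h2 : ((2 * k : ℕ) : ℝ) ≤ (n : ℝ) := by exact_mod_cast this
        push_cast at h2
        linarith
      linarith
    have hpow : (x / 2) ^ k ≤ ((n + 1 - k : ℕ) : ℝ) ^ k :=
      pow_le_pow_left₀ (by linarith) hhalf k
    have hdiv : (x / 2) ^ k / (k.factorial : ℝ) ≤ ((n + 1 - k : ℕ) : ℝ) ^ k / k.factorial := by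
      gcongr
    have hxkk : (x / 2) ^ k / (k.factorial : ℝ) = x ^ k / K1 := by
      rw [hK1, div_pow]
      field_simp
    rw [← hxkk]
    exact hdiv.trans hp
  -- the modulus bound : n² ≤ M^d
  have hMd : n ^ 2 ≤ M ^ d := by
    have hreal : x ^ (2 : ℕ) ≤ (M : ℝ) ^ d := by
      have h1 : (x ^ α) ^ d ≤ (M : ℝ) ^ d := pow_le_pow_left₀ (le_of_lt hxα0) hMge d
      rw [hpow_nat d] at h1
      have h2 : α * (d : ℕ) = ((2 : ℕ) : ℝ) := by
        rw [hα]
        field_simp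
        norm_num
      rw [h2, Real.rpow_natCast] at h1
      exact h1
    have := hreal
    rw [hx] at this
    exact_mod_cast this
  -- key numeric condition
  have hsum : α * ((d * d - c2 : ℕ) : ℝ) + (k : ℝ) = ε1 + ((d + d + (k - 2) : ℕ) : ℝ) := by
    have hcA : ((d + d + (k - 2) : ℕ) : ℝ) = 2 * (d : ℝ) + (k : ℝ) - 2 := by
      push_cast [Nat.cast_sub (show 2 ≤ k by omega)]
      ring
    have hcB : ((d * d - c2 : ℕ) : ℝ) = (d : ℝ) * d - (c2 : ℝ) := by
      push_cast [Nat.cast_sub (le_trans hc2d.le (Nat.le_mul_of_pos_left d hdpos))]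
      ring
    rw [hcA, hcB, hα, hε1]
    field_simp
    ring
  have hcond : 4 * (n.choose d * n.choose d * (d * d * n.choose (k - 2)))
      ≤ n.choose k * M ^ (d * d - c2) := by
    have hcp : ∀ m : ℕ, (n.choose m : ℝ) ≤ x ^ m := fun m => by
      rw [hx]
      exact_mod_cast Nat.choose_le_pow n m
    have hL : (4 : ℝ) * ((n.choose d : ℝ) * (n.choose d : ℝ) *
          ((d : ℝ) * (d : ℝ) * (n.choose (k - 2) : ℝ)))
        ≤ 4 * (d : ℝ) * d * x ^ (d + d + (k - 2)) := by
      have h1 := hcp d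
      have h2 := hcp (k - 2)
      have hnn : (0 : ℝ) ≤ (n.choose d : ℝ) := by positivity
      have hxd : (0 : ℝ) ≤ x ^ d := by positivity
      calc (4 : ℝ) * ((n.choose d : ℝ) * (n.choose d : ℝ) *
            ((d : ℝ) * (d : ℝ) * (n.choose (k - 2) : ℝ)))
          ≤ 4 * ((x ^ d) * (x ^ d) * ((d : ℝ) * (d : ℝ) * (x ^ (k - 2)))) := by
            gcongr
          _ = 4 * (d : ℝ) * d * x ^ (d + d + (k - 2)) := by
            rw [pow_add, pow_add]
            ring
    have hmid : 4 * (d : ℝ) * d * x ^ (d + d + (k - 2)) ≤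
        (x ^ α) ^ (d * d - c2) * (x ^ k / K1) := by
      have hxN : (0 : ℝ) < x ^ (d + d + (k - 2)) := by positivity
      calc 4 * (d : ℝ) * d * x ^ (d + d + (k - 2))
          = (4 * (d : ℝ) * d * K1) * x ^ (d + d + (k - 2)) / K1 := by
            field_simp
        _ ≤ x ^ ε1 * x ^ (d + d + (k - 2)) / K1 := by gcongr
        _ = x ^ (ε1 + ((d + d + (k - 2) : ℕ) : ℝ)) / K1 := by
            rw [← Real.rpow_natCast x (d + d + (k - 2)), ← Real.rpow_add hx0]
        _ = x ^ (α * ((d * d - c2 : ℕ) : ℝ) + (k : ℝ)) / K1 := by rw [hsum]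
        _ = (x ^ α) ^ (d * d - c2) * (x ^ k / K1) := by
            rw [Real.rpow_add hx0, hpow_nat, Real.rpow_natCast]
            ring
    have hR : (x ^ α) ^ (d * d - c2) * (x ^ k / K1) ≤
        (M : ℝ) ^ (d * d - c2) * (n.choose k : ℝ) := by
      have hp1 : (x ^ α) ^ (d * d - c2) ≤ (M : ℝ) ^ (d * d - c2) :=
        pow_le_pow_left₀ (le_of_lt hxα0) hMge _
      have hp2 : (0 : ℝ) ≤ x ^ k / K1 := by positivity
      have hp3 : (0 : ℝ) ≤ (M : ℝ) ^ (d * d - c2) := by positivity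
      exact mul_le_mul hp1 hxk_choose hp2 hp3
    have hfinal : (4 : ℝ) * ((n.choose d : ℝ) * (n.choose d : ℝ) *
          ((d : ℝ) * (d : ℝ) * (n.choose (k - 2) : ℝ)))
        ≤ (n.choose k : ℝ) * (M : ℝ) ^ (d * d - c2) := by
      rw [mul_comm ((n.choose k : ℝ))]
      exact hL.trans (hmid.trans hR)
    exact_mod_cast hfinal
  -- apply the main combinatorial lemma
  have hdn2 : d * d ≤ 2 ^ n := le_trans hddn (Nat.lt_two_pow_self).le
  have hc2dd : c2 ≤ d * d := le_trans hc2d.le (Nat.le_mul_of_pos_left d hdpos)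
  obtain ⟨ω, hω⟩ := exists_good_big n M k d hM0 (by omega) hc2dd hdn2 hcond
  have hfree := ghyper_free n M k d hk hdpos hk2 ω
  have hturan := le_turan (hedgehog k d hk2) (Ghyper n M k d ω) hfree
  have hgood : (Ghyper n M k d ω).edges = good n M k d ω := rfl
  rw [hgood] at hturan
  set g := (good n M k d ω).card with hg
  set t0 := n.choose k / M ^ c2 with ht0
  clear_value t0
  -- real number estimates
  have hM2pos : (0 : ℝ) < (M : ℝ) ^ c2 := by positivity
  have ht0real : (n.choose k : ℝ) / (M : ℝ) ^ c2 - 1 ≤ (t0 : ℝ) := by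
    have hdm := Nat.div_add_mod (n.choose k) (M ^ c2)
    rw [← ht0] at hdm
    have hmod := Nat.mod_lt (n.choose k) (pow_pos hM0 c2)
    have hdist : (t0 + 1) * M ^ c2 = M ^ c2 * t0 + M ^ c2 := by ring
    have hn2 : n.choose k < (t0 + 1) * M ^ c2 := by omega
    have hltR : (n.choose k : ℝ) < ((t0 : ℝ) + 1) * (M : ℝ) ^ c2 := by exact_mod_cast hn2
    have := (div_lt_iff₀ hM2pos).2 hltR
    linarith
  have hlow : C1 * x ^ eR ≤ (n.choose k : ℝ) / (M : ℝ) ^ c2 := by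
    have hMc2 : (M : ℝ) ^ c2 ≤ 2 ^ c2 * (x ^ α) ^ c2 := by
      calc (M : ℝ) ^ c2 ≤ (2 * x ^ α) ^ c2 := pow_le_pow_left₀ (by positivity) hMle c2
        _ = 2 ^ c2 * (x ^ α) ^ c2 := by rw [mul_pow]
    have heq : C1 * x ^ eR = (x ^ k / K1) / (2 ^ c2 * (x ^ α) ^ c2) := by
      rw [hpow_nat c2, heR, Real.rpow_sub hx0, hC1]
      have hαc2 : α * (c2 : ℕ) = 2 * (c2 : ℝ) / d := by
        rw [hα]
        ring
      rw [hαc2, ← Real.rpow_natCast x k]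
      have h1 : (0:ℝ) < x ^ (2 * (c2:ℝ) / d) := Real.rpow_pos_of_pos hx0 _
      field_simp
    rw [heq]
    refine div_le_div₀ (by positivity) hxk_choose hM2pos hMc2
  -- final assembly
  rw [hexp_eq]
  have hgR : (g : ℝ) ≤ (turanNumber k n (hedgehog k d hk2) : ℝ) := by exact_mod_cast hturan
  have hωR : (t0 : ℝ) ≤ 2 * (g : ℝ) := by exact_mod_cast hω
  have hy : 2 ≤ C1 * x ^ eR := by
    have := hE2
    rw [div_le_iff₀ hC1pos] at this
    linarith [this]
  linarith

end HH

end AuxHH3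
/-- **Corollary (hedgehogs: degenerate but with large Turán number).** For `k ≥ 3` and
`d > k(k−1)/2`, the bipartite hedgehog `H_d^(k)` satisfies
`ex(n, H_d^(k)) ≥ a_k · n^(k − k(k−1)/d)` for some `a_k > 0` depending only on `k` and
all sufficiently large `n`, while `d_{k−1}(H_d^(k)) = 1`. -/
theorem hedgehog_turan_lower_and_degenerate (k d : ℕ) (hk : 3 ≤ k)
    (hd : k * (k - 1) / 2 < d) :
    (∃ a > (0 : ℝ), ∃ n0 : ℕ, ∀ n : ℕ, n0 ≤ n →
        a * (n : ℝ) ^ ((k : ℝ) - (k : ℝ) * ((k : ℝ) - 1) / (d : ℝ)) ≤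
          (turanNumber k n (hedgehog k d (by omega)) : ℝ)) ∧
    (hedgehog k d (by omega)).skelDegen (k - 1) = 1 := by
  have hdpos : 0 < d := by
    have h6 : 3 * 2 ≤ k * (k - 1) := Nat.mul_le_mul hk (by omega)
    omega
  exact ⟨HH.turan_part k d hk hd (by omega),
    HH.degen_one k d (by omega) hk hdpos⟩
end

section
/- For all integers d ≥ k ≥ 2, the bipartite hedgehog H_d^(k) satisfies ex(n, H_d^(k)) ≤ A_{d,k} · n^{k − 1/d} for some constant A_{d,k} depending only on d and k, and its skeletal degeneracy satisfies d_1(H_d^(k)) = d. -/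
open Finset

section TuranAux


section Aux

variable {k n : ℕ}

lemma card_filter_supset_le (G : HyperGraph k (Fin n)) (S : Finset (Fin n)) :
    (G.edges.filter fun e => S ⊆ e).card ≤ Nat.choose n (k - S.card) := by
  classical
  calc (G.edges.filter fun e => S ⊆ e).card
      ≤ ((univ : Finset (Fin n)).powersetCard (k - S.card)).card := by
        apply Finset.card_le_card_of_injOn (fun e => e \ S)
        · intro e he
          simp only [mem_coe, mem_filter] at he
          rw [mem_coe, Finset.mem_powersetCard]
          exact ⟨subset_univ _, by rw [card_sdiff_of_subset he.2, G.card_eq e he.1]⟩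
        · intro e he e' he' h
          simp only [coe_filter, Set.mem_setOf_eq] at he he'
          have := congrArg (fun t => t ∪ S) h
          simpa [Finset.sdiff_union_of_subset he.2, Finset.sdiff_union_of_subset he'.2]
            using this
    _ = Nat.choose n (k - S.card) := by
        rw [Finset.card_powersetCard, card_univ, Fintype.card_fin]

/-- `u,v` is a heavy pair: distinct, and for every small forbidden set `F` there is an
edge through `u,v` whose residue avoids `F`. -/
def Heavy (B : ℕ) (G : HyperGraph k (Fin n)) (u v : Fin n) : Prop :=
  u ≠ v ∧ ∀ F : Finset (Fin n), F.card ≤ B →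
    ∃ e ∈ G.edges, u ∈ e ∧ v ∈ e ∧ Disjoint (e \ {u, v}) F

noncomputable instance (B : ℕ) (G : HyperGraph k (Fin n)) (u : Fin n) :
    DecidablePred (Heavy B G u) := fun _ => Classical.dec _

noncomputable instance (B : ℕ) (G : HyperGraph k (Fin n)) :
    DecidablePred (fun p : Fin n × Fin n => Heavy B G p.1 p.2) := fun _ => Classical.dec _

lemma Heavy.symm {B : ℕ} {G : HyperGraph k (Fin n)} {u v : Fin n}
    (h : Heavy B G u v) : Heavy B G v u := by
  obtain ⟨h1, h2⟩ := h
  refine ⟨h1.symm, fun F hF => ?_⟩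
  obtain ⟨e, he, hu, hv, hd⟩ := h2 F hF
  exact ⟨e, he, hv, hu, by rwa [Finset.pair_comm]⟩

lemma sum_choose_le {n d : ℕ} (P : Fin n → Fin n → Prop) [∀ u, DecidablePred (P u)]
    (hfree : ∀ S : Finset (Fin n), S.card = d →
      (univ.filter fun u => ∀ v ∈ S, P u v).card ≤ d - 1) :
    ∑ u : Fin n, Nat.choose (univ.filter (P u)).card d ≤ (d - 1) * Nat.choose n d := by
  classical
  have h1 : ∀ u : Fin n, Nat.choose (univ.filter (P u)).card d
      = ((univ.powersetCard d).filter fun S => S ⊆ univ.filter (P u)).card := by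
    intro u
    rw [← Finset.card_powersetCard]
    congr 1
    ext S
    simp only [Finset.mem_powersetCard, mem_filter, subset_univ, true_and]
    tauto
  calc ∑ u : Fin n, Nat.choose (univ.filter (P u)).card d
      = ∑ u : Fin n, ∑ S ∈ univ.powersetCard d,
          ite (S ⊆ univ.filter (P u)) 1 0 := by
        refine Finset.sum_congr rfl fun u _ => ?_
        rw [h1 u, Finset.card_filter]
    _ = ∑ S ∈ univ.powersetCard d, ∑ u : Fin n,
          ite (S ⊆ univ.filter (P u)) 1 0 := Finset.sum_comm
    _ = ∑ S ∈ univ.powersetCard d, (univ.filter fun u => S ⊆ univ.filter (P u)).card := by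
        simp only [Finset.card_filter]
    _ ≤ ∑ S ∈ univ.powersetCard d, (d - 1) := by
        apply Finset.sum_le_sum
        intro S hS
        rw [Finset.mem_powersetCard] at hS
        have : (univ.filter fun u => S ⊆ univ.filter (P u))
            = (univ.filter fun u => ∀ v ∈ S, P u v) := by
          apply Finset.filter_congr
          intro u _
          simp [Finset.subset_iff]
        rw [this]
        exact hfree S hS.2
    _ = (d - 1) * Nat.choose n d := by
        rw [Finset.sum_const, Finset.card_powersetCard, card_univ, Fintype.card_fin,
          smul_eq_mul, mul_comm]

lemma sum_pow_le {n d : ℕ} (deg : Fin n → ℕ)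
    (h : ∑ u : Fin n, Nat.choose (deg u) d ≤ (d - 1) * Nat.choose n d) :
    ∑ u : Fin n, (deg u + 1 - d) ^ d ≤ (d - 1) * n ^ d := by
  calc ∑ u : Fin n, (deg u + 1 - d) ^ d
      ≤ ∑ u : Fin n, (deg u).descFactorial d :=
        Finset.sum_le_sum fun u _ => Nat.pow_sub_le_descFactorial _ _
    _ = ∑ u : Fin n, Nat.factorial d * (deg u).choose d := by
        simp [Nat.descFactorial_eq_factorial_mul_choose]
    _ = Nat.factorial d * ∑ u : Fin n, (deg u).choose d := by rw [Finset.mul_sum]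
    _ ≤ Nat.factorial d * ((d - 1) * Nat.choose n d) := Nat.mul_le_mul_left _ h
    _ = (d - 1) * (Nat.factorial d * Nat.choose n d) := by ring
    _ = (d - 1) * n.descFactorial d := by rw [Nat.descFactorial_eq_factorial_mul_choose]
    _ ≤ (d - 1) * n ^ d := Nat.mul_le_mul_left _ (Nat.descFactorial_le_pow _ _)

end Aux


lemma real_bound {n d : ℕ} (hd : 2 ≤ d) (deg : Fin n → ℕ)
    (h : ∑ u : Fin n, (deg u + 1 - d) ^ d ≤ (d - 1) * n ^ d) :
    (∑ u : Fin n, (deg u : ℝ)) ≤ d * (n : ℝ) ^ ((2 : ℝ) - 1 / d) + d * n := by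
  have hd0 : (0 : ℝ) < d := by positivity
  rcases Nat.eq_zero_or_pos n with rfl | hn
  · simp only [Finset.univ_eq_empty, Finset.sum_empty]
    positivity
  set a : Fin n → ℝ := fun u => ((deg u + 1 - d : ℕ) : ℝ) with ha_def
  have ha : ∀ u ∈ (univ : Finset (Fin n)), 0 ≤ a u := fun u _ => Nat.cast_nonneg _
  have key := pow_sum_div_card_le_sum_pow (s := univ) (f := a) ha (d - 1)
  have hd1 : d - 1 + 1 = d := by omega
  rw [hd1, card_univ, Fintype.card_fin] at key
  set T := ∑ u : Fin n, a u with hT_def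
  have hT : 0 ≤ T := Finset.sum_nonneg ha
  have hsum : ∑ u : Fin n, a u ^ d ≤ ((d - 1) * n ^ d : ℕ) := by
    have : (∑ u : Fin n, a u ^ d) = ((∑ u : Fin n, (deg u + 1 - d) ^ d : ℕ) : ℝ) := by
      push_cast [ha_def]; rfl
    rw [this]
    exact_mod_cast h
  have hnR : (0 : ℝ) < n := by exact_mod_cast hn
  have hTd : T ^ d ≤ ((d : ℝ) - 1) * (n : ℝ) ^ (2 * d - 1) := by
    have h2 : T ^ d ≤ (∑ u : Fin n, a u ^ d) * (n : ℝ) ^ (d - 1) := by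
      rw [div_le_iff₀ (by positivity)] at key
      exact key
    have h3 : (∑ u : Fin n, a u ^ d) * (n : ℝ) ^ (d - 1)
        ≤ (((d - 1) * n ^ d : ℕ) : ℝ) * (n : ℝ) ^ (d - 1) :=
      mul_le_mul_of_nonneg_right hsum (by positivity)
    refine h2.trans (h3.trans ?_)
    have : (((d - 1) * n ^ d : ℕ) : ℝ) = ((d : ℝ) - 1) * (n : ℝ) ^ d := by
      push_cast [Nat.cast_sub (by omega : 1 ≤ d)]
      ring
    rw [this, mul_assoc, ← pow_add]
    have : d + (d - 1) = 2 * d - 1 := by omega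
    rw [this]
  -- take d-th roots
  have hTle : T ≤ (d : ℝ) * (n : ℝ) ^ ((2 : ℝ) - 1 / d) := by
    have h1 : T = (T ^ d) ^ ((1 : ℝ) / d) := by
      rw [← Real.rpow_natCast T d, ← Real.rpow_mul hT,
        mul_one_div_cancel (ne_of_gt hd0), Real.rpow_one]
    have h2 : (T ^ d) ^ ((1 : ℝ) / d)
        ≤ (((d : ℝ) - 1) * (n : ℝ) ^ (2 * d - 1)) ^ ((1 : ℝ) / d) :=
      Real.rpow_le_rpow (by positivity) hTd (by positivity)
    have hd1R : (0 : ℝ) ≤ (d : ℝ) - 1 := by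
      have : (1 : ℝ) ≤ d := by exact_mod_cast (by omega : 1 ≤ d)
      linarith
    have h3 : (((d : ℝ) - 1) * (n : ℝ) ^ (2 * d - 1)) ^ ((1 : ℝ) / d)
        = ((d : ℝ) - 1) ^ ((1 : ℝ) / d) * ((n : ℝ) ^ (2 * d - 1)) ^ ((1 : ℝ) / d) :=
      Real.mul_rpow hd1R (by positivity)
    have h4 : ((n : ℝ) ^ (2 * d - 1)) ^ ((1 : ℝ) / d) = (n : ℝ) ^ ((2 : ℝ) - 1 / d) := by
      rw [← Real.rpow_natCast (n : ℝ) (2 * d - 1), ← Real.rpow_mul (le_of_lt hnR)]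
      congr 1
      have : ((2 * d - 1 : ℕ) : ℝ) = 2 * (d : ℝ) - 1 := by
        push_cast [Nat.cast_sub (by omega : 1 ≤ 2 * d)]
        ring
      rw [this]
      field_simp
    have h5 : ((d : ℝ) - 1) ^ ((1 : ℝ) / d) ≤ (d : ℝ) := by
      have hb : (1 : ℝ) ≤ (d : ℝ) - 1 := by
        have : (2 : ℝ) ≤ d := by exact_mod_cast hd
        linarith
      have := Real.rpow_le_rpow_of_exponent_le hb
        (by rw [div_le_one hd0]; exact_mod_cast (by omega : 1 ≤ d) : (1 : ℝ) / d ≤ 1)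
      rw [Real.rpow_one] at this
      linarith
    calc T = (T ^ d) ^ ((1 : ℝ) / d) := h1
      _ ≤ (((d : ℝ) - 1) * (n : ℝ) ^ (2 * d - 1)) ^ ((1 : ℝ) / d) := h2
      _ = ((d : ℝ) - 1) ^ ((1 : ℝ) / d) * ((n : ℝ) ^ (2 * d - 1)) ^ ((1 : ℝ) / d) := h3
      _ ≤ (d : ℝ) * (n : ℝ) ^ ((2 : ℝ) - 1 / d) := by
          rw [h4]
          exact mul_le_mul_of_nonneg_right h5 (Real.rpow_nonneg (le_of_lt hnR) _)
  have hdeg : ∀ u : Fin n, (deg u : ℝ) ≤ a u + d := by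
    intro u
    have : deg u ≤ deg u + 1 - d + d := by omega
    calc (deg u : ℝ) ≤ ((deg u + 1 - d + d : ℕ) : ℝ) := by exact_mod_cast this
      _ = a u + d := by push_cast [ha_def]; ring
  calc (∑ u : Fin n, (deg u : ℝ)) ≤ ∑ u : Fin n, (a u + (d : ℝ)) :=
        Finset.sum_le_sum fun u _ => hdeg u
    _ = T + n * d := by rw [Finset.sum_add_distrib, hT_def]; simp [mul_comm]
    _ ≤ (d : ℝ) * (n : ℝ) ^ ((2 : ℝ) - 1 / d) + d * n := by
        rw [mul_comm (n : ℝ) (d : ℝ)] at *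
        linarith

lemma containsCopy_of_heavy {k n : ℕ} (hk : 2 ≤ k) {d : ℕ} (G : HyperGraph k (Fin n))
    (x y : Fin d → Fin n) (hx : Function.Injective x) (hy : Function.Injective y)
    (hxy : ∀ i j, x i ≠ y j)
    (hH : ∀ i j, Heavy ((k - 2) * (d * d) + 2 * d) G (x i) (y j)) :
    G.ContainsCopy (hedgehog k d hk) := by
  classical
  set core : Finset (Fin n) := univ.image x ∪ univ.image y with hcore
  have hcorecard : core.card ≤ 2 * d := by
    calc core.card ≤ (univ.image x).card + (univ.image y).card := card_union_le _ _
      _ ≤ d + d := Nat.add_le_add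
          ((card_image_le).trans (by simp))
          ((card_image_le).trans (by simp))
      _ = 2 * d := by ring
  have hpairxy : ∀ p : Fin d × Fin d, ({x p.1, y p.2} : Finset (Fin n)).card = 2 := by
    intro p
    rw [card_insert_of_notMem (by simp [hxy p.1 p.2]), card_singleton]
  have greedy : ∀ s : Finset (Fin d × Fin d), ∃ E : Fin d × Fin d → Finset (Fin n),
      ∀ p ∈ s, E p ∈ G.edges ∧ x p.1 ∈ E p ∧ y p.2 ∈ E p ∧
        Disjoint (E p \ {x p.1, y p.2}) core ∧
        ∀ q ∈ s, q ≠ p → Disjoint (E p \ {x p.1, y p.2}) (E q \ {x q.1, y q.2}) := by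
    intro s
    induction s using Finset.induction_on with
    | empty => exact ⟨fun _ => ∅, by simp⟩
    | @insert a s ha IH =>
      obtain ⟨E, hE⟩ := IH
      set F : Finset (Fin n) := core ∪ s.biUnion (fun q => E q \ {x q.1, y q.2}) with hF
      have hFcard : F.card ≤ (k - 2) * (d * d) + 2 * d := by
        have h1 : (s.biUnion (fun q => E q \ {x q.1, y q.2})).card
            ≤ ∑ q ∈ s, (E q \ {x q.1, y q.2}).card := card_biUnion_le
        have h2 : ∀ q ∈ s, (E q \ {x q.1, y q.2}).card = k - 2 := by
          intro q hq
          obtain ⟨hq1, hq2, hq3, -, -⟩ := hE q hq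
          rw [card_sdiff_of_subset (by simp [insert_subset_iff, hq2, hq3]), G.card_eq _ hq1, hpairxy]
        have h3 : ∑ q ∈ s, (E q \ {x q.1, y q.2}).card = s.card * (k - 2) := by
          rw [Finset.sum_congr rfl h2, Finset.sum_const, smul_eq_mul]
        have h4 : s.card ≤ d * d := by
          have := Finset.card_le_univ s
          simpa [Fintype.card_prod] using this
        have h5 : s.card * (k - 2) ≤ d * d * (k - 2) := Nat.mul_le_mul_right _ h4
        calc F.card ≤ core.card + (s.biUnion (fun q => E q \ {x q.1, y q.2})).card :=
              card_union_le _ _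
          _ ≤ 2 * d + d * d * (k - 2) := by
              have := h1.trans (h3.le.trans h5)
              omega
          _ = (k - 2) * (d * d) + 2 * d := by ring
      have hsubF : ∀ q ∈ s, E q \ {x q.1, y q.2} ⊆ F := by
        intro q hq
        rw [hF]
        exact (Finset.subset_biUnion_of_mem (fun q => E q \ {x q.1, y q.2}) hq).trans subset_union_right
      have hcoreF : core ⊆ F := by rw [hF]; exact subset_union_left
      obtain ⟨e, he, hxe, hye, hdisj⟩ := (hH a.1 a.2).2 F hFcard
      refine ⟨Function.update E a e, ?_⟩
      intro p hp
      rcases Finset.mem_insert.1 hp with rfl | hp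
      · rw [Function.update_self]
        refine ⟨he, hxe, hye, hdisj.mono_right hcoreF, ?_⟩
        intro q hq hqp
        rcases Finset.mem_insert.1 hq with rfl | hq
        · exact absurd rfl hqp
        · rw [Function.update_of_ne (ne_of_mem_of_not_mem hq ha)]
          exact hdisj.mono_right (hsubF q hq)
      · rename_i hps
        have hpa : p ≠ a := ne_of_mem_of_not_mem hp ha
        rw [Function.update_of_ne hpa]
        obtain ⟨h1, h2, h3, h4, h5⟩ := hE p hp
        refine ⟨h1, h2, h3, h4, ?_⟩
        intro q hq hqp
        rcases Finset.mem_insert.1 hq with rfl | hq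
        · rw [Function.update_self]
          exact (hdisj.mono_right (hsubF p hp)).symm
        · rw [Function.update_of_ne (ne_of_mem_of_not_mem hq ha)]
          exact h5 q hq hqp
  obtain ⟨E, hE⟩ := greedy univ
  have hEdge : ∀ p, E p ∈ G.edges := fun p => (hE p (mem_univ p)).1
  have hxE : ∀ p : Fin d × Fin d, x p.1 ∈ E p := fun p => (hE p (mem_univ p)).2.1
  have hyE : ∀ p : Fin d × Fin d, y p.2 ∈ E p := fun p => (hE p (mem_univ p)).2.2.1
  have hcoreE : ∀ p, Disjoint (E p \ {x p.1, y p.2}) core :=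
    fun p => (hE p (mem_univ p)).2.2.2.1
  have hdisjE : ∀ p q, q ≠ p →
      Disjoint (E p \ {x p.1, y p.2}) (E q \ {x q.1, y q.2}) :=
    fun p q hq => (hE p (mem_univ p)).2.2.2.2 q (mem_univ q) hq
  have hres : ∀ p : Fin d × Fin d, (E p \ {x p.1, y p.2}).card = k - 2 := by
    intro p
    rw [card_sdiff_of_subset (by simp [insert_subset_iff, hxE p, hyE p]), G.card_eq _ (hEdge p), hpairxy]
  set σ : Fin d × Fin d → Fin (k - 2) → Fin n :=
    fun p m => (((E p \ {x p.1, y p.2}).orderIsoOfFin (hres p)) m : Fin n) with hσ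
  have hσmem : ∀ p m, σ p m ∈ E p \ {x p.1, y p.2} := by
    intro p m
    exact (((E p \ {x p.1, y p.2}).orderIsoOfFin (hres p)) m).2
  have hσinj : ∀ p, Function.Injective (σ p) := by
    intro p a b hab
    have := Subtype.ext hab
    exact ((E p \ {x p.1, y p.2}).orderIsoOfFin (hres p)).injective this
  have hσimg : ∀ p, univ.image (σ p) = E p \ {x p.1, y p.2} := by
    intro p
    apply Finset.eq_of_subset_of_card_le
    · intro v hv
      obtain ⟨m, -, rfl⟩ := Finset.mem_image.1 hv
      exact hσmem p m
    · rw [Finset.card_image_of_injective _ (hσinj p), hres p, card_univ, Fintype.card_fin]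
  have hσne_core : ∀ p m (c : Fin n), c ∈ core → σ p m ≠ c := by
    intro p m c hc hEq
    exact Finset.disjoint_left.1 (hcoreE p) (hσmem p m) (hEq ▸ hc)
  have hxcore : ∀ i, x i ∈ core := fun i => mem_union_left _ (mem_image_of_mem x (mem_univ i))
  have hycore : ∀ j, y j ∈ core := fun j => mem_union_right _ (mem_image_of_mem y (mem_univ j))
  refine ⟨Sum.elim x (Sum.elim y fun t => σ (t.2.1, t.2.2) t.1), ?_, ?_⟩
  · intro a b hab
    rcases a with i | j | ⟨m, i, j⟩ <;> rcases b with i' | j' | ⟨m', i', j'⟩ <;>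
      simp only [Sum.elim_inl, Sum.elim_inr] at hab
    · rw [hx hab]
    · exact absurd hab (hxy i j')
    · exact absurd hab.symm (hσne_core _ _ _ (hxcore i))
    · exact absurd hab.symm (hxy i' j)
    · rw [hy hab]
    · exact absurd hab.symm (hσne_core _ _ _ (hycore j))
    · exact absurd hab (hσne_core _ _ _ (hxcore i'))
    · exact absurd hab (hσne_core _ _ _ (hycore j'))
    · by_cases hpq : ((i, j) : Fin d × Fin d) = (i', j')
      · obtain ⟨rfl, rfl⟩ := Prod.mk.injEq .. ▸ hpq
        rw [hσinj _ hab]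
      · exfalso
        have h1 := hσmem (i, j) m
        have h2 := hσmem (i', j') m'
        rw [hab] at h1
        exact Finset.disjoint_left.1 (hdisjE (i', j') (i, j) hpq) h2 h1
  · intro e he
    simp only [hedgehog, Finset.mem_image, mem_univ, true_and] at he
    obtain ⟨p, rfl⟩ := he
    rw [Finset.image_union, Finset.image_image]
    have h1 : ({Sum.inl p.1, Sum.inr (Sum.inl p.2)} :
        Finset (Fin d ⊕ Fin d ⊕ (Fin (k - 2) × Fin d × Fin d))).image
          (Sum.elim x (Sum.elim y fun t => σ (t.2.1, t.2.2) t.1)) = {x p.1, y p.2} := by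
      rw [Finset.image_insert, Finset.image_singleton]
      simp
    have h2 : univ.image
        ((Sum.elim x (Sum.elim y fun t => σ (t.2.1, t.2.2) t.1)) ∘
          fun m : Fin (k - 2) => Sum.inr (Sum.inr (m, p.1, p.2)))
        = E p \ {x p.1, y p.2} := by
      rw [show ((Sum.elim x (Sum.elim y fun t => σ (t.2.1, t.2.2) t.1)) ∘
          fun m : Fin (k - 2) => Sum.inr (Sum.inr (m, p.1, p.2))) = σ (p.1, p.2) from rfl]
      rw [hσimg (p.1, p.2)]
    rw [h1, h2, Finset.union_sdiff_of_subset (by simp [insert_subset_iff, hxE p, hyE p])]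
    exact hEdge p

lemma heavy_common_le {k n : ℕ} (hk : 2 ≤ k) {d : ℕ} (hd : 2 ≤ d)
    (G : HyperGraph k (Fin n)) (hG : ¬ G.ContainsCopy (hedgehog k d hk))
    (S : Finset (Fin n)) (hS : S.card = d) :
    (univ.filter fun v => ∀ u ∈ S, Heavy ((k - 2) * (d * d) + 2 * d) G u v).card ≤ d - 1 := by
  classical
  by_contra hcon
  push_neg at hcon
  have hdle : d ≤ (univ.filter fun v => ∀ u ∈ S, Heavy ((k - 2) * (d * d) + 2 * d) G u v).card := by
    omega
  obtain ⟨T, hTsub, hT⟩ := Finset.exists_subset_card_eq hdle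
  have hTprop : ∀ v ∈ T, ∀ u ∈ S, Heavy ((k - 2) * (d * d) + 2 * d) G u v := by
    intro v hv
    exact (Finset.mem_filter.1 (hTsub hv)).2
  have hST : ∀ u ∈ S, ∀ v ∈ T, u ≠ v := by
    intro u hu v hv
    exact (hTprop v hv u hu).1
  set x : Fin d → Fin n := fun i => (S.orderIsoOfFin hS i : Fin n) with hx_def
  set y : Fin d → Fin n := fun j => (T.orderIsoOfFin hT j : Fin n) with hy_def
  have hxS : ∀ i, x i ∈ S := fun i => (S.orderIsoOfFin hS i).2
  have hyT : ∀ j, y j ∈ T := fun j => (T.orderIsoOfFin hT j).2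
  apply hG
  apply containsCopy_of_heavy hk G x y
  · intro a b hab
    exact (S.orderIsoOfFin hS).injective (Subtype.ext hab)
  · intro a b hab
    exact (T.orderIsoOfFin hT).injective (Subtype.ext hab)
  · intro i j
    exact hST _ (hxS i) _ (hyT j)
  · intro i j
    exact hTprop _ (hyT j) _ (hxS i)

lemma main_bound {k d n : ℕ} (hk : 2 ≤ k) (hkd : k ≤ d) (hn : 1 ≤ n)
    (G : HyperGraph k (Fin n)) (hG : ¬ G.ContainsCopy (hedgehog k d hk)) :
    (G.edges.card : ℝ) ≤
      ((2 * d + ((k - 2) * (d * d) + 2 * d) * (k - 2) : ℕ) : ℝ) *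
        (n : ℝ) ^ ((k : ℝ) - 1 / d) := by
  classical
  have hd : 2 ≤ d := hk.trans hkd
  set B := (k - 2) * (d * d) + 2 * d with hB
  set m := G.edges.card with hm
  set deg : Fin n → ℕ := fun u => (univ.filter fun v => Heavy B G u v).card with hdeg
  -- master double count
  have hcount : m * (k * k - k) = ∑ p ∈ (univ : Finset (Fin n)).offDiag,
      (G.edges.filter fun e => p.1 ∈ e ∧ p.2 ∈ e).card := by
    calc m * (k * k - k) = ∑ e ∈ G.edges, e.offDiag.card := by
          rw [Finset.sum_congr rfl (fun e he => by rw [Finset.offDiag_card, G.card_eq e he]),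
            Finset.sum_const, smul_eq_mul]
      _ = ∑ e ∈ G.edges, ((univ : Finset (Fin n)).offDiag.filter
            fun p => p.1 ∈ e ∧ p.2 ∈ e).card := by
          refine Finset.sum_congr rfl fun e he => ?_
          congr 1
          ext p
          simp only [Finset.mem_offDiag, Finset.mem_filter, Finset.mem_univ, true_and]
          tauto
      _ = ∑ e ∈ G.edges, ∑ p ∈ (univ : Finset (Fin n)).offDiag,
            ite (p.1 ∈ e ∧ p.2 ∈ e) 1 0 := by
          refine Finset.sum_congr rfl fun e _ => ?_
          rw [Finset.card_filter]
      _ = ∑ p ∈ (univ : Finset (Fin n)).offDiag, ∑ e ∈ G.edges,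
            ite (p.1 ∈ e ∧ p.2 ∈ e) 1 0 := Finset.sum_comm
      _ = _ := by
          refine Finset.sum_congr rfl fun p _ => ?_
          rw [Finset.card_filter]
  have hsplit := Finset.sum_filter_add_sum_filter_not ((univ : Finset (Fin n)).offDiag)
      (fun p => Heavy B G p.1 p.2)
      (fun p => (G.edges.filter fun e => p.1 ∈ e ∧ p.2 ∈ e).card)
  -- heavy side
  have hheavy : ∑ p ∈ ((univ : Finset (Fin n)).offDiag.filter fun p => Heavy B G p.1 p.2),
      (G.edges.filter fun e => p.1 ∈ e ∧ p.2 ∈ e).card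
      ≤ (∑ u : Fin n, deg u) * Nat.choose n (k - 2) := by
    have hper : ∀ p ∈ ((univ : Finset (Fin n)).offDiag.filter fun p => Heavy B G p.1 p.2),
        (G.edges.filter fun e => p.1 ∈ e ∧ p.2 ∈ e).card ≤ Nat.choose n (k - 2) := by
      intro p hp
      have hne : p.1 ≠ p.2 :=
        (Finset.mem_offDiag.1 (Finset.mem_filter.1 hp).1).2.2
      have hcard2 : ({p.1, p.2} : Finset (Fin n)).card = 2 := by
        rw [card_insert_of_notMem (by simp [hne]), card_singleton]
      have h1 := card_filter_supset_le G {p.1, p.2}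
      rw [hcard2] at h1
      refine le_trans (le_of_eq ?_) h1
      congr 1
      apply Finset.filter_congr
      intro e _
      simp [insert_subset_iff]
    calc ∑ p ∈ ((univ : Finset (Fin n)).offDiag.filter fun p => Heavy B G p.1 p.2),
        (G.edges.filter fun e => p.1 ∈ e ∧ p.2 ∈ e).card
        ≤ ∑ _p ∈ ((univ : Finset (Fin n)).offDiag.filter fun p => Heavy B G p.1 p.2),
            Nat.choose n (k - 2) := Finset.sum_le_sum hper
      _ = ((univ : Finset (Fin n)).offDiag.filter fun p => Heavy B G p.1 p.2).card
            * Nat.choose n (k - 2) := by rw [Finset.sum_const, smul_eq_mul]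
      _ ≤ (∑ u : Fin n, deg u) * Nat.choose n (k - 2) := by
          apply Nat.mul_le_mul_right
          have h1 : ((univ : Finset (Fin n)).offDiag.filter fun p => Heavy B G p.1 p.2)
              ⊆ ((univ ×ˢ univ : Finset (Fin n × Fin n)).filter fun p => Heavy B G p.1 p.2) :=
            Finset.filter_subset_filter _
              (fun p _ => Finset.mem_product.2 ⟨mem_univ _, mem_univ _⟩)
          have h2 : ((univ ×ˢ univ : Finset (Fin n × Fin n)).filter
              fun p => Heavy B G p.1 p.2).card = ∑ u : Fin n, deg u := by
            rw [Finset.card_filter, Finset.sum_product]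
            refine Finset.sum_congr rfl fun u _ => ?_
            simp only [hdeg, Finset.card_filter]
          rw [← h2]
          exact Finset.card_le_card h1
  -- light side
  have hlight : ∑ p ∈ ((univ : Finset (Fin n)).offDiag.filter fun p => ¬ Heavy B G p.1 p.2),
      (G.edges.filter fun e => p.1 ∈ e ∧ p.2 ∈ e).card
      ≤ (n * n) * (B * ((k - 2) * Nat.choose n (k - 3))) := by
    have hper : ∀ p ∈ ((univ : Finset (Fin n)).offDiag.filter fun p => ¬ Heavy B G p.1 p.2),
        (G.edges.filter fun e => p.1 ∈ e ∧ p.2 ∈ e).card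
          ≤ B * ((k - 2) * Nat.choose n (k - 3)) := by
      intro p hp
      rw [Finset.mem_filter] at hp
      obtain ⟨hpd, hnh⟩ := hp
      have hne : p.1 ≠ p.2 := (Finset.mem_offDiag.1 hpd).2.2
      rw [Heavy, not_and] at hnh
      have hnh2 := hnh hne
      push_neg at hnh2
      obtain ⟨F, hFcard, hFcov⟩ := hnh2
      have hsub : (G.edges.filter fun e => p.1 ∈ e ∧ p.2 ∈ e) ⊆
          F.biUnion (fun w => G.edges.filter fun e =>
            p.1 ∈ e ∧ p.2 ∈ e ∧ w ∈ e \ ({p.1, p.2} : Finset (Fin n))) := by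
        intro e he
        rw [Finset.mem_filter] at he
        obtain ⟨he1, he2, he3⟩ := he
        have hnd := hFcov e he1 he2 he3
        rw [Finset.not_disjoint_iff] at hnd
        obtain ⟨w, hw1, hw2⟩ := hnd
        exact Finset.mem_biUnion.2 ⟨w, hw2, Finset.mem_filter.2 ⟨he1, he2, he3, hw1⟩⟩
      have hperw : ∀ w ∈ F, (G.edges.filter fun e =>
          p.1 ∈ e ∧ p.2 ∈ e ∧ w ∈ e \ ({p.1, p.2} : Finset (Fin n))).card
            ≤ (k - 2) * Nat.choose n (k - 3) := by
        intro w _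
        by_cases hw2 : w ∈ ({p.1, p.2} : Finset (Fin n))
        · have : (G.edges.filter fun e =>
              p.1 ∈ e ∧ p.2 ∈ e ∧ w ∈ e \ ({p.1, p.2} : Finset (Fin n))) = ∅ := by
            rw [Finset.eq_empty_iff_forall_notMem]
            intro e he
            exact (Finset.mem_sdiff.1 (Finset.mem_filter.1 he).2.2.2).2 hw2
          rw [this]
          simp
        · have hw1 : w ≠ p.1 := by simp only [Finset.mem_insert, Finset.mem_singleton] at hw2; tauto
          have hw3 : w ≠ p.2 := by simp only [Finset.mem_insert, Finset.mem_singleton] at hw2; tauto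
          have hsub3 : (G.edges.filter fun e =>
              p.1 ∈ e ∧ p.2 ∈ e ∧ w ∈ e \ ({p.1, p.2} : Finset (Fin n)))
              ⊆ (G.edges.filter fun e => ({p.1, p.2, w} : Finset (Fin n)) ⊆ e) := by
            intro e he
            rw [Finset.mem_filter] at he ⊢
            obtain ⟨he1, he2, he3, he4⟩ := he
            refine ⟨he1, ?_⟩
            rw [insert_subset_iff, insert_subset_iff, singleton_subset_iff]
            exact ⟨he2, he3, (Finset.mem_sdiff.1 he4).1⟩
          have hcard3 : ({p.1, p.2, w} : Finset (Fin n)).card = 3 := by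
            rw [card_insert_of_notMem (by simp [hne, hw1.symm]),
              card_insert_of_notMem (by simp [hw3.symm]), card_singleton]
          by_cases hk3 : 3 ≤ k
          · have h1 := card_filter_supset_le G {p.1, p.2, w}
            rw [hcard3] at h1
            exact le_trans (Finset.card_le_card hsub3)
              (h1.trans (Nat.le_mul_of_pos_left _ (by omega)))
          · have hkeq : k = 2 := by omega
            have : (G.edges.filter fun e =>
                p.1 ∈ e ∧ p.2 ∈ e ∧ w ∈ e \ ({p.1, p.2} : Finset (Fin n))) = ∅ := by
              rw [Finset.eq_empty_iff_forall_notMem]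
              intro e he
              have hmem := hsub3 he
              rw [Finset.mem_filter] at hmem
              have h3 : 3 ≤ e.card := hcard3 ▸ Finset.card_le_card hmem.2
              rw [G.card_eq e hmem.1, hkeq] at h3
              omega
            rw [this]
            simp
      calc (G.edges.filter fun e => p.1 ∈ e ∧ p.2 ∈ e).card
          ≤ (F.biUnion (fun w => G.edges.filter fun e =>
              p.1 ∈ e ∧ p.2 ∈ e ∧ w ∈ e \ ({p.1, p.2} : Finset (Fin n)))).card :=
            Finset.card_le_card hsub
        _ ≤ ∑ w ∈ F, (G.edges.filter fun e =>
              p.1 ∈ e ∧ p.2 ∈ e ∧ w ∈ e \ ({p.1, p.2} : Finset (Fin n))).card :=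
            Finset.card_biUnion_le
        _ ≤ ∑ _w ∈ F, (k - 2) * Nat.choose n (k - 3) := Finset.sum_le_sum hperw
        _ = F.card * ((k - 2) * Nat.choose n (k - 3)) := by
            rw [Finset.sum_const, smul_eq_mul]
        _ ≤ B * ((k - 2) * Nat.choose n (k - 3)) := Nat.mul_le_mul_right _ hFcard
    calc ∑ p ∈ ((univ : Finset (Fin n)).offDiag.filter fun p => ¬ Heavy B G p.1 p.2),
        (G.edges.filter fun e => p.1 ∈ e ∧ p.2 ∈ e).card
        ≤ ∑ _p ∈ ((univ : Finset (Fin n)).offDiag.filter fun p => ¬ Heavy B G p.1 p.2),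
            B * ((k - 2) * Nat.choose n (k - 3)) := Finset.sum_le_sum hper
      _ = ((univ : Finset (Fin n)).offDiag.filter fun p => ¬ Heavy B G p.1 p.2).card
            * (B * ((k - 2) * Nat.choose n (k - 3))) := by
          rw [Finset.sum_const, smul_eq_mul]
      _ ≤ (n * n) * (B * ((k - 2) * Nat.choose n (k - 3))) := by
          apply Nat.mul_le_mul_right
          calc ((univ : Finset (Fin n)).offDiag.filter fun p => ¬ Heavy B G p.1 p.2).card
              ≤ (univ : Finset (Fin n)).offDiag.card :=
                Finset.card_le_card (Finset.filter_subset _ _)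
            _ ≤ n * n := by
                rw [Finset.offDiag_card, card_univ, Fintype.card_fin]
                omega
  -- combine in ℕ
  have hN : m * (k * k - k) ≤ (∑ u : Fin n, deg u) * Nat.choose n (k - 2)
      + (n * n) * (B * ((k - 2) * Nat.choose n (k - 3))) := by
    rw [hcount, ← hsplit]
    exact Nat.add_le_add hheavy hlight
  have hmm : m ≤ m * (k * k - k) := by
    have h1 : k < k * k := lt_of_lt_of_le (by omega : k < 2 * k) (Nat.mul_le_mul_right k hk)
    exact Nat.le_mul_of_pos_right m (by omega)
  -- counting heavy degrees
  have hfree : ∀ S : Finset (Fin n), S.card = d →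
      (univ.filter fun u => ∀ v ∈ S, Heavy B G u v).card ≤ d - 1 := by
    intro S hS
    have h2 := heavy_common_le hk hd G hG S hS
    have h3 : (univ.filter fun u => ∀ v ∈ S, Heavy B G u v)
        = (univ.filter fun v => ∀ u ∈ S, Heavy ((k - 2) * (d * d) + 2 * d) G u v) := by
      apply Finset.filter_congr
      intro v _
      constructor
      · intro h u hu; exact (h u hu).symm
      · intro h u hu; exact (h u hu).symm
    rw [h3]
    exact h2
  have hchoose := sum_choose_le (fun u v => Heavy B G u v) hfree
  have hpow := sum_pow_le deg hchoose
  have hreal := real_bound hd deg hpow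
  -- assemble over ℝ
  have hc0 : (0 : ℝ) < (n : ℝ) := by exact_mod_cast hn
  have hc1 : (1 : ℝ) ≤ (n : ℝ) := by exact_mod_cast hn
  have hdR : (1 : ℝ) ≤ (d : ℝ) := by exact_mod_cast (by omega : 1 ≤ d)
  have hinv : 1 / (d : ℝ) ≤ 1 := by
    rw [div_le_one (by linarith)]
    exact hdR
  have hinv0 : 0 < 1 / (d : ℝ) := by positivity
  -- heavy real bound
  have hr2 : (n : ℝ) ≤ (n : ℝ) ^ ((2 : ℝ) - 1 / d) := by
    nth_rewrite 1 [← Real.rpow_one (n : ℝ)]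
    exact Real.rpow_le_rpow_of_exponent_le hc1 (by linarith)
  have hsumdeg : (∑ u : Fin n, (deg u : ℝ)) ≤ 2 * d * (n : ℝ) ^ ((2 : ℝ) - 1 / d) := by
    have : (d : ℝ) * (n : ℝ) ≤ (d : ℝ) * (n : ℝ) ^ ((2 : ℝ) - 1 / d) :=
      mul_le_mul_of_nonneg_left hr2 (by linarith)
    linarith [hreal]
  have hchoosek2 : ((Nat.choose n (k - 2) : ℕ) : ℝ) ≤ (n : ℝ) ^ (((k - 2 : ℕ) : ℝ)) := by
    rw [Real.rpow_natCast]
    exact_mod_cast Nat.choose_le_pow n (k - 2)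
  have hheavyR : ((∑ u : Fin n, deg u) * Nat.choose n (k - 2) : ℕ)
      ≤ (2 * (d : ℝ)) * (n : ℝ) ^ ((k : ℝ) - 1 / d) := by
    push_cast
    have hdegnn : (0 : ℝ) ≤ ∑ u : Fin n, (deg u : ℝ) :=
      Finset.sum_nonneg fun u _ => Nat.cast_nonneg _
    calc (∑ u : Fin n, (deg u : ℝ)) * ((Nat.choose n (k - 2) : ℕ) : ℝ)
        ≤ (2 * d * (n : ℝ) ^ ((2 : ℝ) - 1 / d)) * ((n : ℝ) ^ (((k - 2 : ℕ) : ℝ))) := by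
          apply mul_le_mul hsumdeg hchoosek2 (Nat.cast_nonneg _)
          positivity
      _ = (2 * (d : ℝ)) * (n : ℝ) ^ ((k : ℝ) - 1 / d) := by
          rw [mul_assoc, ← Real.rpow_add hc0]
          congr 2
          push_cast [Nat.cast_sub hk]
          ring
  -- light real bound
  have hlightN : (n * n) * (B * ((k - 2) * Nat.choose n (k - 3)))
      ≤ B * (k - 2) * n ^ (k - 1) := by
    by_cases hk3 : 3 ≤ k
    · have h1 : Nat.choose n (k - 3) ≤ n ^ (k - 3) := Nat.choose_le_pow n (k - 3)
      calc (n * n) * (B * ((k - 2) * Nat.choose n (k - 3)))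
          ≤ (n * n) * (B * ((k - 2) * n ^ (k - 3))) := by
            apply Nat.mul_le_mul_left
            apply Nat.mul_le_mul_left
            exact Nat.mul_le_mul_left _ h1
        _ = B * (k - 2) * (n ^ 2 * n ^ (k - 3)) := by ring
        _ = B * (k - 2) * n ^ (k - 1) := by
            rw [← pow_add, show 2 + (k - 3) = k - 1 from by omega]
    · have hkeq : k = 2 := by omega
      subst hkeq
      simp
  have hlightR : (((n * n) * (B * ((k - 2) * Nat.choose n (k - 3))) : ℕ) : ℝ)
      ≤ ((B * (k - 2) : ℕ) : ℝ) * (n : ℝ) ^ ((k : ℝ) - 1 / d) := by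
    calc (((n * n) * (B * ((k - 2) * Nat.choose n (k - 3))) : ℕ) : ℝ)
        ≤ ((B * (k - 2) * n ^ (k - 1) : ℕ) : ℝ) := by exact_mod_cast hlightN
      _ = ((B * (k - 2) : ℕ) : ℝ) * ((n : ℝ) ^ (((k - 1 : ℕ) : ℝ))) := by
          push_cast
          rw [Real.rpow_natCast]
      _ ≤ ((B * (k - 2) : ℕ) : ℝ) * (n : ℝ) ^ ((k : ℝ) - 1 / d) := by
          apply mul_le_mul_of_nonneg_left _ (Nat.cast_nonneg _)
          apply Real.rpow_le_rpow_of_exponent_le hc1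
          push_cast [Nat.cast_sub (by omega : 1 ≤ k)]
          linarith
  -- final
  have hfinal : (m : ℝ) ≤ (2 * (d : ℝ)) * (n : ℝ) ^ ((k : ℝ) - 1 / d)
      + ((B * (k - 2) : ℕ) : ℝ) * (n : ℝ) ^ ((k : ℝ) - 1 / d) := by
    have h1 : (m : ℝ) ≤ (((∑ u : Fin n, deg u) * Nat.choose n (k - 2)
        + (n * n) * (B * ((k - 2) * Nat.choose n (k - 3))) : ℕ) : ℝ) := by
      exact_mod_cast hmm.trans hN
    rw [Nat.cast_add] at h1
    exact h1.trans (add_le_add hheavyR hlightR)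
  calc (m : ℝ) ≤ (2 * (d : ℝ)) * (n : ℝ) ^ ((k : ℝ) - 1 / d)
        + ((B * (k - 2) : ℕ) : ℝ) * (n : ℝ) ^ ((k : ℝ) - 1 / d) := hfinal
    _ = ((2 * d + B * (k - 2) : ℕ) : ℝ) * (n : ℝ) ^ ((k : ℝ) - 1 / d) := by
        push_cast
        ring
    _ = ((2 * d + ((k - 2) * (d * d) + 2 * d) * (k - 2) : ℕ) : ℝ)
          * (n : ℝ) ^ ((k : ℝ) - 1 / d) := by rw [hB]

end TuranAux

instance (priority := 2000) degenFilterDec {α : Type} [DecidableEq α] (v : α) (U : Finset α) :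
    DecidablePred fun e : Finset α => v ∈ e ∧ e ⊆ U := fun _ => instDecidableAnd

/-- **Proposition (hedgehog Turán upper bound).** For `d ≥ k ≥ 2`,
`ex(n, H_d^(k)) ≤ A_{d,k} · n^(k − 1/d)` for a constant `A_{d,k}` depending only on `d`
and `k`, and `d₁(H_d^(k)) = d`. -/
theorem hedgehog_turan_upper (k d : ℕ) (hk : 2 ≤ k) (hkd : k ≤ d) :
    (∃ A : ℝ, ∀ n : ℕ,
        (turanNumber k n (hedgehog k d hk) : ℝ) ≤
          A * (n : ℝ) ^ ((k : ℝ) - 1 / (d : ℝ))) ∧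
    (hedgehog k d hk).d1 = d := by
  have hd : 2 ≤ d := hk.trans hkd
  constructor
  · classical
    refine ⟨((2 * d + ((k - 2) * (d * d) + 2 * d) * (k - 2) : ℕ) : ℝ), fun n => ?_⟩
    have hset : {m | ∃ G : HyperGraph k (Fin n), G.edges.card = m
        ∧ ¬ G.ContainsCopy (hedgehog k d hk)}.Nonempty := by
      refine ⟨0, ⟨⟨∅, by simp⟩, rfl, ?_⟩⟩
      rintro ⟨f, hf, hcopy⟩
      have hedge : ({Sum.inl (⟨0, by omega⟩ : Fin d), Sum.inr (Sum.inl (⟨0, by omega⟩ : Fin d))} ∪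
          Finset.univ.image fun m : Fin (k - 2) =>
            Sum.inr (Sum.inr (m, (⟨0, by omega⟩ : Fin d), (⟨0, by omega⟩ : Fin d))))
          ∈ (hedgehog k d hk).edges := by
        simp only [hedgehog, Finset.mem_image, mem_univ, true_and]
        exact ⟨(⟨0, by omega⟩, ⟨0, by omega⟩), rfl⟩
      have := hcopy _ hedge
      simpa using this
    have hbdd : BddAbove {m | ∃ G : HyperGraph k (Fin n), G.edges.card = m
        ∧ ¬ G.ContainsCopy (hedgehog k d hk)} := by
      refine ⟨Fintype.card (Finset (Fin n)), ?_⟩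
      rintro m ⟨G, rfl, -⟩
      exact Finset.card_le_univ _
    have hmem := Nat.sSup_mem hset hbdd
    obtain ⟨G, hGcard, hGfree⟩ := hmem
    unfold turanNumber
    rw [← hGcard]
    rcases Nat.eq_zero_or_pos n with rfl | hn
    · have hemp : G.edges = ∅ := by
        rw [Finset.eq_empty_iff_forall_notMem]
        intro e he
        have h1 := G.card_eq e he
        have hne : e.Nonempty := by rw [← Finset.card_pos, h1]; omega
        obtain ⟨x, -⟩ := hne
        exact Fin.elim0 x
      rw [hemp]
      simp only [Finset.card_empty, Nat.cast_zero]
      positivity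
    · exact main_bound hk hkd hn G hGfree
  · -- skeletal degeneracy
    set E := (hedgehog k d hk).skeleton 1 with hE
    have hmemE : ∀ e, e ∈ E ↔ ∃ p : Fin d × Fin d,
        e ⊆ ({Sum.inl p.1, Sum.inr (Sum.inl p.2)} ∪
          Finset.univ.image fun m : Fin (k - 2) => Sum.inr (Sum.inr (m, p.1, p.2))) ∧
          e.card = 2 := by
      intro e
      simp only [hE, HyperGraph.skeleton, hedgehog, Finset.mem_biUnion, Finset.mem_image,
        Finset.mem_powersetCard, mem_univ, true_and]
      constructor
      · rintro ⟨E', ⟨p, rfl⟩, h1, h2⟩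
        exact ⟨p, h1, h2⟩
      · rintro ⟨p, h1, h2⟩
        exact ⟨_, ⟨p, rfl⟩, h1, h2⟩
    have hpairE : ∀ i j : Fin d,
        ({Sum.inl i, Sum.inr (Sum.inl j)} :
          Finset (Fin d ⊕ Fin d ⊕ (Fin (k - 2) × Fin d × Fin d))) ∈ E := by
      intro i j
      rw [hmemE]
      refine ⟨(i, j), ?_, ?_⟩
      · intro v hv
        simp only [Finset.mem_insert, Finset.mem_singleton] at hv
        rcases hv with rfl | rfl
        · exact mem_union_left _ (mem_insert_self _ _)
        · exact mem_union_left _ (mem_insert_of_mem (Finset.mem_singleton_self _))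
      · rw [card_insert_of_notMem (by simp), card_singleton]
    -- upper bound on induced degrees for core vertices when U has no private vertices
    have hfiltL : ∀ (U : Finset (Fin d ⊕ Fin d ⊕ (Fin (k - 2) × Fin d × Fin d))),
        (∀ w ∈ U, (∃ i', w = Sum.inl i') ∨ ∃ j', w = Sum.inr (Sum.inl j')) →
        ∀ i : Fin d, (E.filter fun e => (Sum.inl i : Fin d ⊕ Fin d ⊕ (Fin (k - 2) × Fin d × Fin d)) ∈ e ∧ e ⊆ U) ⊆
          (univ : Finset (Fin d)).image fun j =>
            ({Sum.inl i, Sum.inr (Sum.inl j)} :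
              Finset (Fin d ⊕ Fin d ⊕ (Fin (k - 2) × Fin d × Fin d))) := by
      intro U hU i e he
      rw [Finset.mem_filter] at he
      obtain ⟨heE, hie, heU⟩ := he
      rw [hmemE] at heE
      obtain ⟨p, hsub, hcard⟩ := heE
      have hsub2 : e ⊆ ({Sum.inl p.1, Sum.inr (Sum.inl p.2)} :
          Finset (Fin d ⊕ Fin d ⊕ (Fin (k - 2) × Fin d × Fin d))) := by
        intro v hv
        have hvU := heU hv
        have hvE := hsub hv
        simp only [Finset.mem_union, Finset.mem_insert, Finset.mem_singleton,
          Finset.mem_image, mem_univ, true_and] at hvE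
        rcases hvE with (rfl | rfl) | ⟨m, rfl⟩
        · exact mem_insert_self _ _
        · exact mem_insert_of_mem (Finset.mem_singleton_self _)
        · rcases hU _ hvU with ⟨i', h⟩ | ⟨j', h⟩ <;> simp at h
      have hecard : e = ({Sum.inl p.1, Sum.inr (Sum.inl p.2)} :
          Finset (Fin d ⊕ Fin d ⊕ (Fin (k - 2) × Fin d × Fin d))) := by
        apply Finset.eq_of_subset_of_card_le hsub2
        rw [hcard, card_insert_of_notMem (by simp), card_singleton]
      have hii : Sum.inl i ∈ ({Sum.inl p.1, Sum.inr (Sum.inl p.2)} :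
          Finset (Fin d ⊕ Fin d ⊕ (Fin (k - 2) × Fin d × Fin d))) := hecard ▸ hie
      simp only [Finset.mem_insert, Finset.mem_singleton] at hii
      rcases hii with h | h
      · have hip : i = p.1 := by simpa using h
        subst hip
        exact Finset.mem_image.2 ⟨p.2, mem_univ _, hecard.symm⟩
      · simp at h
    have hfiltR : ∀ (U : Finset (Fin d ⊕ Fin d ⊕ (Fin (k - 2) × Fin d × Fin d))),
        (∀ w ∈ U, (∃ i', w = Sum.inl i') ∨ ∃ j', w = Sum.inr (Sum.inl j')) →
        ∀ j : Fin d, (E.filter fun e => (Sum.inr (Sum.inl j) : Fin d ⊕ Fin d ⊕ (Fin (k - 2) × Fin d × Fin d)) ∈ e ∧ e ⊆ U) ⊆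
          (univ : Finset (Fin d)).image fun i =>
            ({Sum.inl i, Sum.inr (Sum.inl j)} :
              Finset (Fin d ⊕ Fin d ⊕ (Fin (k - 2) × Fin d × Fin d))) := by
      intro U hU j e he
      rw [Finset.mem_filter] at he
      obtain ⟨heE, hje, heU⟩ := he
      rw [hmemE] at heE
      obtain ⟨p, hsub, hcard⟩ := heE
      have hsub2 : e ⊆ ({Sum.inl p.1, Sum.inr (Sum.inl p.2)} :
          Finset (Fin d ⊕ Fin d ⊕ (Fin (k - 2) × Fin d × Fin d))) := by
        intro v hv
        have hvU := heU hv
        have hvE := hsub hv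
        simp only [Finset.mem_union, Finset.mem_insert, Finset.mem_singleton,
          Finset.mem_image, mem_univ, true_and] at hvE
        rcases hvE with (rfl | rfl) | ⟨m, rfl⟩
        · exact mem_insert_self _ _
        · exact mem_insert_of_mem (Finset.mem_singleton_self _)
        · rcases hU _ hvU with ⟨i', h⟩ | ⟨j', h⟩ <;> simp at h
      have hecard : e = ({Sum.inl p.1, Sum.inr (Sum.inl p.2)} :
          Finset (Fin d ⊕ Fin d ⊕ (Fin (k - 2) × Fin d × Fin d))) := by
        apply Finset.eq_of_subset_of_card_le hsub2
        rw [hcard, card_insert_of_notMem (by simp), card_singleton]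
      have hjj : Sum.inr (Sum.inl j) ∈ ({Sum.inl p.1, Sum.inr (Sum.inl p.2)} :
          Finset (Fin d ⊕ Fin d ⊕ (Fin (k - 2) × Fin d × Fin d))) := hecard ▸ hje
      simp only [Finset.mem_insert, Finset.mem_singleton] at hjj
      rcases hjj with h | h
      · simp at h
      · have hjp : j = p.2 := by simpa using h
        subst hjp
        exact Finset.mem_image.2 ⟨p.1, mem_univ _, hecard.symm⟩
    -- degree bound at private vertices
    have hfiltP : ∀ (U : Finset (Fin d ⊕ Fin d ⊕ (Fin (k - 2) × Fin d × Fin d)))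
        (t : Fin (k - 2) × Fin d × Fin d),
        (E.filter fun e => (Sum.inr (Sum.inr t) : Fin d ⊕ Fin d ⊕ (Fin (k - 2) × Fin d × Fin d)) ∈ e ∧ e ⊆ U).card ≤ k - 1 := by
      intro U t
      set w : Fin d ⊕ Fin d ⊕ (Fin (k - 2) × Fin d × Fin d) := Sum.inr (Sum.inr t) with hw_def
      set Ed : Finset (Fin d ⊕ Fin d ⊕ (Fin (k - 2) × Fin d × Fin d)) :=
        {Sum.inl t.2.1, Sum.inr (Sum.inl t.2.2)} ∪
          Finset.univ.image (fun m : Fin (k - 2) => Sum.inr (Sum.inr (m, t.2.1, t.2.2)))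
        with hEd_def
      have hEdmem : Ed ∈ (hedgehog k d hk).edges := by
        simp only [hedgehog, Finset.mem_image, mem_univ, true_and, hEd_def]
        exact ⟨(t.2.1, t.2.2), rfl⟩
      have hEdcard : Ed.card = k := (hedgehog k d hk).card_eq Ed hEdmem
      have hw : w ∈ Ed := by
        rw [hEd_def]
        refine mem_union_right _ (Finset.mem_image.2 ⟨t.1, mem_univ _, ?_⟩)
        rw [hw_def]
      have hsubim : (E.filter fun e => w ∈ e ∧ e ⊆ U) ⊆
          (Ed \ {w}).image (fun v => ({w, v} :
            Finset (Fin d ⊕ Fin d ⊕ (Fin (k - 2) × Fin d × Fin d)))) := by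
        intro e he
        rw [Finset.mem_filter] at he
        obtain ⟨heE, hwe, -⟩ := he
        rw [hmemE] at heE
        obtain ⟨p, hsubp, hcard⟩ := heE
        have hEdp : ({Sum.inl p.1, Sum.inr (Sum.inl p.2)} ∪
            Finset.univ.image fun m : Fin (k - 2) => Sum.inr (Sum.inr (m, p.1, p.2))) = Ed := by
          have hwp := hsubp hwe
          simp only [Finset.mem_union, Finset.mem_insert, Finset.mem_singleton,
            Finset.mem_image, mem_univ, true_and, hw_def] at hwp
          rcases hwp with (h | h) | ⟨m, h⟩
          · exact absurd h (by simp)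
          · exact absurd h (by simp)
          · have h1 : t = (m, p.1, p.2) := by
              have := h
              simp only [Sum.inr.injEq] at this
              exact this.symm
            rw [hEd_def, h1]
        obtain ⟨a, b, hab, habe⟩ := Finset.card_eq_two.1 hcard
        have hae : a ∈ e := by rw [habe]; exact mem_insert_self _ _
        have hbe : b ∈ e := by rw [habe]; exact mem_insert_of_mem (Finset.mem_singleton_self _)
        have haEd : a ∈ Ed := hEdp ▸ hsubp hae
        have hbEd : b ∈ Ed := hEdp ▸ hsubp hbe
        rw [habe] at hwe
        simp only [Finset.mem_insert, Finset.mem_singleton] at hwe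
        rcases hwe with rfl | rfl
        · refine Finset.mem_image.2 ⟨b, ?_, habe.symm⟩
          rw [Finset.mem_sdiff, Finset.mem_singleton]
          exact ⟨hbEd, fun h => hab h.symm⟩
        · refine Finset.mem_image.2 ⟨a, ?_, ?_⟩
          · rw [Finset.mem_sdiff, Finset.mem_singleton]
            exact ⟨haEd, hab⟩
          · rw [habe, Finset.pair_comm]
      calc (E.filter fun e => w ∈ e ∧ e ⊆ U).card
          ≤ ((Ed \ {w}).image (fun v => ({w, v} :
              Finset (Fin d ⊕ Fin d ⊕ (Fin (k - 2) × Fin d × Fin d))))).card :=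
            Finset.card_le_card hsubim
        _ ≤ (Ed \ {w}).card := Finset.card_image_le
        _ = k - 1 := by
            rw [Finset.card_sdiff_of_subset (by simpa using hw), hEdcard, Finset.card_singleton]
    -- membership: degenLE E d
    have hmemdeg : degenLE E d := by
      intro U hUne
      by_cases hp : ∃ w ∈ U, ∃ t : Fin (k - 2) × Fin d × Fin d, w = Sum.inr (Sum.inr t)
      · obtain ⟨w, hwU, t, rfl⟩ := hp
        refine ⟨_, hwU, le_trans (hfiltP U t) ?_⟩
        omega
      · push_neg at hp
        have hUcore : ∀ w ∈ U, (∃ i', w = Sum.inl i') ∨ ∃ j', w = Sum.inr (Sum.inl j') := by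
          intro w hw
          rcases w with i | j | t
          · exact Or.inl ⟨i, rfl⟩
          · exact Or.inr ⟨j, rfl⟩
          · exact absurd rfl (hp _ hw t)
        obtain ⟨v, hv⟩ := hUne
        rcases hUcore v hv with ⟨i, rfl⟩ | ⟨j, rfl⟩
        · refine ⟨_, hv, ?_⟩
          calc (E.filter fun e => (Sum.inl i : Fin d ⊕ Fin d ⊕ (Fin (k - 2) × Fin d × Fin d)) ∈ e ∧ e ⊆ U).card
              ≤ ((univ : Finset (Fin d)).image fun j =>
                  ({Sum.inl i, Sum.inr (Sum.inl j)} :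
                    Finset (Fin d ⊕ Fin d ⊕ (Fin (k - 2) × Fin d × Fin d)))).card :=
                Finset.card_le_card (hfiltL U hUcore i)
            _ ≤ d := Finset.card_image_le.trans (by simp)
        · refine ⟨_, hv, ?_⟩
          calc (E.filter fun e => (Sum.inr (Sum.inl j) : Fin d ⊕ Fin d ⊕ (Fin (k - 2) × Fin d × Fin d)) ∈ e ∧ e ⊆ U).card
              ≤ ((univ : Finset (Fin d)).image fun i =>
                  ({Sum.inl i, Sum.inr (Sum.inl j)} :
                    Finset (Fin d ⊕ Fin d ⊕ (Fin (k - 2) × Fin d × Fin d)))).card :=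
                Finset.card_le_card (hfiltR U hUcore j)
            _ ≤ d := Finset.card_image_le.trans (by simp)
    -- lower bound
    have hnotdeg : ∀ b : ℕ, degenLE E b → d ≤ b := by
      intro b hb
      set U : Finset (Fin d ⊕ Fin d ⊕ (Fin (k - 2) × Fin d × Fin d)) :=
        (univ.image (Sum.inl : Fin d → Fin d ⊕ Fin d ⊕ (Fin (k - 2) × Fin d × Fin d))) ∪
          (univ.image fun j : Fin d => Sum.inr (Sum.inl j)) with hU_def
      have hinlU : ∀ i : Fin d, (Sum.inl i : Fin d ⊕ Fin d ⊕ (Fin (k - 2) × Fin d × Fin d)) ∈ U :=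
        fun i => mem_union_left _ (Finset.mem_image.2 ⟨i, mem_univ _, rfl⟩)
      have hinrU : ∀ j : Fin d,
          (Sum.inr (Sum.inl j) : Fin d ⊕ Fin d ⊕ (Fin (k - 2) × Fin d × Fin d)) ∈ U :=
        fun j => mem_union_right _ (Finset.mem_image.2 ⟨j, mem_univ _, rfl⟩)
      have hUne : U.Nonempty := ⟨Sum.inl ⟨0, by omega⟩, hinlU _⟩
      obtain ⟨v, hvU, hvdeg⟩ := hb U hUne
      have hUsub : ∀ e : Finset (Fin d ⊕ Fin d ⊕ (Fin (k - 2) × Fin d × Fin d)),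
          ∀ i j : Fin d, e = {Sum.inl i, Sum.inr (Sum.inl j)} → e ⊆ U := by
        rintro e i j rfl v hv
        simp only [Finset.mem_insert, Finset.mem_singleton] at hv
        rcases hv with rfl | rfl
        · exact hinlU i
        · exact hinrU j
      have hvcases : (∃ i, v = Sum.inl i) ∨ ∃ j, v = Sum.inr (Sum.inl j) := by
        rcases v with i | j | t
        · exact Or.inl ⟨i, rfl⟩
        · exact Or.inr ⟨j, rfl⟩
        · exfalso
          rw [hU_def] at hvU
          simp at hvU
      rcases hvcases with ⟨i, rfl⟩ | ⟨j, rfl⟩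
      · have himg : ((univ : Finset (Fin d)).image fun j =>
            ({Sum.inl i, Sum.inr (Sum.inl j)} :
              Finset (Fin d ⊕ Fin d ⊕ (Fin (k - 2) × Fin d × Fin d))))
            ⊆ E.filter fun e => Sum.inl i ∈ e ∧ e ⊆ U := by
          intro e he
          obtain ⟨j, -, rfl⟩ := Finset.mem_image.1 he
          rw [Finset.mem_filter]
          exact ⟨hpairE i j, mem_insert_self _ _, hUsub _ i j rfl⟩
        have hinj : Function.Injective (fun j : Fin d =>
            ({Sum.inl i, Sum.inr (Sum.inl j)} :
              Finset (Fin d ⊕ Fin d ⊕ (Fin (k - 2) × Fin d × Fin d)))) := by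
          intro a b' hab
          have hab2 : ({Sum.inl i, Sum.inr (Sum.inl a)} :
              Finset (Fin d ⊕ Fin d ⊕ (Fin (k - 2) × Fin d × Fin d)))
              = {Sum.inl i, Sum.inr (Sum.inl b')} := hab
          have hmem : (Sum.inr (Sum.inl a) : Fin d ⊕ Fin d ⊕ (Fin (k - 2) × Fin d × Fin d))
              ∈ ({Sum.inl i, Sum.inr (Sum.inl b')} :
                Finset (Fin d ⊕ Fin d ⊕ (Fin (k - 2) × Fin d × Fin d))) := by
            rw [← hab2]
            exact mem_insert_of_mem (Finset.mem_singleton_self _)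
          simp only [Finset.mem_insert, Finset.mem_singleton] at hmem
          rcases hmem with h | h
          · exact absurd h (by simp)
          · simpa using h
        calc d = ((univ : Finset (Fin d)).image fun j =>
              ({Sum.inl i, Sum.inr (Sum.inl j)} :
                Finset (Fin d ⊕ Fin d ⊕ (Fin (k - 2) × Fin d × Fin d)))).card := by
              rw [Finset.card_image_of_injective _ hinj, card_univ, Fintype.card_fin]
          _ ≤ (E.filter fun e => (Sum.inl i : Fin d ⊕ Fin d ⊕ (Fin (k - 2) × Fin d × Fin d)) ∈ e ∧ e ⊆ U).card := Finset.card_le_card himg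
          _ ≤ b := hvdeg
      · have himg : ((univ : Finset (Fin d)).image fun i =>
            ({Sum.inl i, Sum.inr (Sum.inl j)} :
              Finset (Fin d ⊕ Fin d ⊕ (Fin (k - 2) × Fin d × Fin d))))
            ⊆ E.filter fun e => Sum.inr (Sum.inl j) ∈ e ∧ e ⊆ U := by
          intro e he
          obtain ⟨i, -, rfl⟩ := Finset.mem_image.1 he
          rw [Finset.mem_filter]
          exact ⟨hpairE i j, mem_insert_of_mem (Finset.mem_singleton_self _), hUsub _ i j rfl⟩
        have hinj : Function.Injective (fun i : Fin d =>
            ({Sum.inl i, Sum.inr (Sum.inl j)} :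
              Finset (Fin d ⊕ Fin d ⊕ (Fin (k - 2) × Fin d × Fin d)))) := by
          intro a b' hab
          have hab2 : ({Sum.inl a, Sum.inr (Sum.inl j)} :
              Finset (Fin d ⊕ Fin d ⊕ (Fin (k - 2) × Fin d × Fin d)))
              = {Sum.inl b', Sum.inr (Sum.inl j)} := hab
          have hmem : (Sum.inl a : Fin d ⊕ Fin d ⊕ (Fin (k - 2) × Fin d × Fin d))
              ∈ ({Sum.inl b', Sum.inr (Sum.inl j)} :
                Finset (Fin d ⊕ Fin d ⊕ (Fin (k - 2) × Fin d × Fin d))) := by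
            rw [← hab2]
            exact mem_insert_self _ _
          simp only [Finset.mem_insert, Finset.mem_singleton] at hmem
          rcases hmem with h | h
          · simpa using h
          · exact absurd h (by simp)
        calc d = ((univ : Finset (Fin d)).image fun i =>
              ({Sum.inl i, Sum.inr (Sum.inl j)} :
                Finset (Fin d ⊕ Fin d ⊕ (Fin (k - 2) × Fin d × Fin d)))).card := by
              rw [Finset.card_image_of_injective _ hinj, card_univ, Fintype.card_fin]
          _ ≤ (E.filter fun e => (Sum.inr (Sum.inl j) : Fin d ⊕ Fin d ⊕ (Fin (k - 2) × Fin d × Fin d)) ∈ e ∧ e ⊆ U).card := Finset.card_le_card himg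
          _ ≤ b := hvdeg
    show degeneracy E = d
    apply le_antisymm
    · exact Nat.sInf_le hmemdeg
    · exact le_csInf ⟨d, hmemdeg⟩ hnotdeg
end
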